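/- arXiv:2001.07047 — 8 statements merged into one kernel-verified Lean document; each statement's English description precedes it below -/
import Mathlib

section
/- Let Σ be a finite unital ring of size q ≥ 2 and k ≥ 2 the duplication-window length. Then the average of r(x) over all x ∈ Σ^n satisfies (1/q^n) Σ_{x∈Σ^n} r(x) = ((q−1)/(q(q^k−1)))·(n−k) + O(1); that is, there is a constant B (depending only on q and k) such that for all n ≥ k, |(1/q^n) Σ_{x∈Σ^n} r(x) − ((q−1)/(q(q^k−1)))·(n−k)| ≤ B. -/
open scoped BigOperators Classical
open Filter

namespace TandemDup

variable {S : Type} [Fintype S] [DecidableEq S] [Ring S]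

/-- A single tandem duplication with window length `k`:
`a = xyz` with `|y| = k` is mapped to `b = xyyz`. -/
def Dup (k : ℕ) (a b : List S) : Prop :=
  ∃ x y z : List S, y.length = k ∧ a = x ++ y ++ z ∧ b = x ++ y ++ y ++ z

/-- `DescN k t x y` : `y` is a `t`-descendant of `x`. -/
def DescN (k : ℕ) : ℕ → List S → List S → Prop
  | 0, a, b => a = b
  | t + 1, a, b => ∃ c, DescN k t a c ∧ Dup k c b

/-- The set `D^t(x)` of `t`-descendants of `x`. -/
def DSet (k t : ℕ) (x : List S) : Set (List S) := {y | DescN k t x y}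

/-- The descendant cone `D^*(x)`. -/
def DStar (k : ℕ) (x : List S) : Set (List S) := ⋃ t : ℕ, DSet k t x

/-- A string of length at least `k` is irreducible if it has no ancestor other than itself. -/
def Irred (k : ℕ) (x : List S) : Prop :=
  k ≤ x.length ∧ ∀ z : List S, x ∈ DStar k z → z = x

/-- The duplication root `rt(y)`: an irreducible ancestor of `y` (unique, by the theory). -/
noncomputable def rt (k : ℕ) (y : List S) : List S :=
  if h : ∃ x : List S, Irred k x ∧ y ∈ DStar k x then h.choose else y

/-- The (non-anchor part of the) discrete derivative `φ̄(x)`. -/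
def phiBar (k : ℕ) (x : List S) : List S :=
  (List.range (x.length - k)).map (fun i => x.getD (i + k) 0 - x.getD i 0)

/-- Hamming weight of a string: the number of its nonzero letters. -/
def wtH (l : List S) : ℕ := (l.filter (fun a => decide (a ≠ 0))).length

/-- `w(x) := wt_H(φ̄(x))`. -/
def wgt (k : ℕ) (x : List S) : ℕ := wtH (phiBar k x)

/-- `r(x) := (|x| - |rt(x)|)/k`, the number of duplications taking `rt(x)` to `x`. -/
noncomputable def rr (k : ℕ) (x : List S) : ℕ := (x.length - (rt k x).length) / k

/-- The typicality condition on the weight `w`. -/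
def wTypical (q k n w : ℕ) : Prop :=
  |(w : ℝ) - (((q : ℝ) - 1) / (q : ℝ)) * ((n : ℝ) - (k : ℝ))| < (n : ℝ) ^ ((3 : ℝ) / 4)

/-- The typicality condition on the number of duplications `r`. -/
def rTypical (q k n r : ℕ) : Prop :=
  |(r : ℝ) - (((q : ℝ) - 1) / ((q : ℝ) * ((q : ℝ) ^ k - 1))) * ((n : ℝ) - (k : ℝ))|
    < 2 * (n : ℝ) ^ ((3 : ℝ) / 4)

/-- The typical set `typ^n`. -/
def typ (k n : ℕ) : Set (List S) :=
  {x | x.length = n ∧ wTypical (Fintype.card S) k n (wgt k x) ∧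
    rTypical (Fintype.card S) k n (rr k x)}

/-- The uncertainty `N_t(m, C)`: the maximal size of `⋂ᵢ D^t(xᵢ)` over pairwise
distinct `x₁, …, x_m ∈ C`. -/
noncomputable def Nt (k t m : ℕ) (C : Set (List S)) : ℕ :=
  sSup { N : ℕ | ∃ f : Fin m → List S, Function.Injective f ∧ (∀ i, f i ∈ C) ∧
    N = (⋂ i, DSet k t (f i)).ncard }

/-- `S̄_t(u₁, …, u_m) = ⋂ᵢ {v : v ≥ uᵢ, ‖v - uᵢ‖₁ = t}`. -/
def Sbar (w t : ℕ) {m : ℕ} (u : Fin m → (Fin (w + 1) → ℕ)) : Set (Fin (w + 1) → ℕ) :=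
  ⋂ i, {v | u i ≤ v ∧ ∑ j, (v j - u i j) = t}

/-- `N̄_t(m, w, r)`. -/
noncomputable def Nbar (t m w r : ℕ) : ℕ :=
  sSup { N : ℕ | ∃ u : Fin m → (Fin (w + 1) → ℕ), Function.Injective u ∧
    (∀ i, ∑ j, u i j = r) ∧ N = (Sbar w t u).ncard }

/-- The minimum supremum height `σ(m, w, r)`. -/
noncomputable def sigma (m w r : ℕ) : ℕ :=
  sInf { s : ℕ | ∃ u : Fin m → (Fin (w + 1) → ℕ), Function.Injective u ∧
    (∀ i, ∑ j, u i j = r) ∧ (∑ j, Finset.univ.sup fun i => u i j) = r + s }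

/-- The lower-bounds set `A_r(u)`. -/
def lbs (w r : ℕ) (u : Fin (w + 1) → ℕ) : Set (Fin (w + 1) → ℕ) :=
  {v | (∑ j, v j) = r ∧ v ≤ u}

/-- The maximal lower-bounds-set size `μ(w, r, s)`. -/
noncomputable def mu (w r s : ℕ) : ℕ :=
  sSup { N : ℕ | ∃ u : Fin (w + 1) → ℕ, (∑ j, u j) = r + s ∧ N = (lbs w r u).ncard }

/-- Twice the distance `d₁`, i.e. the `ℓ₁`-distance `‖u - v‖₁` on `ℕ^{w+1}`. -/
def l1dist {w : ℕ} (u v : Fin (w + 1) → ℕ) : ℕ :=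
  ∑ j, ((u j - v j) + (v j - u j))

/-- `N̄_t(m, w, r, d)`. -/
noncomputable def NbarD (t m w r d : ℕ) : ℕ :=
  sSup { N : ℕ | ∃ u : Fin m → (Fin (w + 1) → ℕ),
    (∀ i, ∑ j, u i j = r) ∧ (∀ i j, i ≠ j → 2 * d ≤ l1dist (u i) (u j)) ∧
    N = (Sbar w t u).ncard }

/-- `σ(m, w, r, d)`. -/
noncomputable def sigmaD (m w r d : ℕ) : ℕ :=
  sInf { s : ℕ | ∃ u : Fin m → (Fin (w + 1) → ℕ),
    (∀ i, ∑ j, u i j = r) ∧ (∀ i j, i ≠ j → 2 * d ≤ l1dist (u i) (u j)) ∧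
    (∑ j, Finset.univ.sup fun i => u i j) = r + s }

/-- `μ(w, r, s, d)`. -/
noncomputable def muD (w r s d : ℕ) : ℕ :=
  sSup { N : ℕ | ∃ u : Fin (w + 1) → ℕ, (∑ j, u j) = r + s ∧
    ∃ C : Set (Fin (w + 1) → ℕ), C ⊆ lbs w r u ∧
      (∀ v₁ ∈ C, ∀ v₂ ∈ C, v₁ ≠ v₂ → 2 * d ≤ l1dist v₁ v₂) ∧ N = C.ncard }

/-- The duplication distance `d(y₁, y₂)`. -/
noncomputable def distDup (k : ℕ) (y₁ y₂ : List S) : ℕ :=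
  sInf {t : ℕ | (DSet k t y₁ ∩ DSet k t y₂).Nonempty}

/-- `N^typ_t(m, n, d)`. -/
noncomputable def NtypD (k t m n d : ℕ) : ℕ :=
  sSup { N : ℕ | ∃ f : Fin m → List S, (∀ i, f i ∈ typ k n) ∧
    (∀ i j, i ≠ j → d ≤ distDup k (f i) (f j)) ∧
    N = (⋂ i, DSet k t (f i)).ncard }

/-- `A(ν, D, ω)`: the maximum size of a binary code of length `ν`, constant Hamming
weight `ω`, and minimum Hamming distance `D`. -/
noncomputable def Abin (ν D ω : ℕ) : ℕ :=
  sSup { N : ℕ | ∃ C : Set (Fin ν → ZMod 2), (∀ x ∈ C, hammingNorm x = ω) ∧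
    (∀ x ∈ C, ∀ y ∈ C, x ≠ y → D ≤ hammingDist x y) ∧ N = C.ncard }

/-- Zero-run-length representation: `ψ_x(y)` as a list, mapping `φ̄(y)` written as
`0^{u(1)} a₁ 0^{u(2)} … a_w 0^{u(w+1)}` (with the `aᵢ` nonzero) to
`(⌊u(1)/k⌋, …, ⌊u(w+1)/k⌋)`. -/
def psiList (k : ℕ) (y : List S) : List ℕ :=
  ((phiBar k y).splitOnP (fun a => decide (a ≠ 0))).map (fun run => run.length / k)

/-- `ψ_x(y)` as a vector in `ℕ^{w+1}`. -/
def psiVec (k w : ℕ) (y : List S) : Fin (w + 1) → ℕ := fun i => (psiList k y).getD i 0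

/-- `s = ⌈log_n m⌉`. -/
noncomputable def sExp (n m : ℕ) : ℕ := ⌈Real.logb n m⌉₊

/-- The indicator `δ(m, n)` of Theorem 17. -/
noncomputable def deltaTyp (q k n m : ℕ) : ℕ :=
  if ∀ r : ℕ, rTypical q k n r → Nat.choose (r + sExp n m) r < m then 1 else 0

/-- `s = ⌈log_n m⌉ + d - 1`. -/
noncomputable def sExpD (n m d : ℕ) : ℕ := sExp n m + (d - 1)

/-- The indicator `δ(m, n, d)` of Theorem 29. -/
noncomputable def deltaEcc (q k d n m : ℕ) : ℕ :=
  if ∀ r : ℕ, rTypical q k n r → Abin (r + sExpD n m d) (2 * d) (sExpD n m d) < m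
  then 1 else 0


/-!
Write `φ̄(x)` as runs of zeros separated by nonzero letters. A duplication inserts a block `0^k`
into `φ̄`, and a string whose `φ̄` contains `0^k` can be deduplicated; hence `r(x)` is the number
`∑ ⌊ρ / k⌋` of `0^k` blocks in the zero runs (of lengths `ρ`) of `φ̄(x)`. As `x` ranges over
`Σ^n`, `φ̄(x)` covers `Σ^(n-k)` exactly `q^k` times, so the average of `r` is the average block
count of a uniform string of length `N = n - k`. Conditioning on the first letter gives a linear
recurrence for the total block count, which an explicit potential solves up to the drift
`(q - 1) / (q (q^k - 1))` per letter, with an error of at most one.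
-/

section ZeroBlocks

variable {α : Type*} [Zero α] [DecidableEq α]

/-- `zeroBlocks k r l = ∑ ⌊ρ / k⌋`, summed over the maximal zero runs of `0^r ++ l`,
`ρ` being the run length. -/
def zeroBlocks (k : ℕ) : ℕ → List α → ℕ
  | r, [] => r / k
  | r, a :: l => if a = 0 then zeroBlocks k (r + 1) l else r / k + zeroBlocks k 0 l

@[simp] lemma zeroBlocks_nil (k r : ℕ) : zeroBlocks k r ([] : List α) = r / k := rfl

@[simp] lemma zeroBlocks_cons_zero (k r : ℕ) (l : List α) :
    zeroBlocks k r ((0 : α) :: l) = zeroBlocks k (r + 1) l := by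
  simp [zeroBlocks]

lemma zeroBlocks_cons_of_ne_zero (k r : ℕ) {a : α} (ha : a ≠ 0) (l : List α) :
    zeroBlocks k r (a :: l) = r / k + zeroBlocks k 0 l := by
  simp [zeroBlocks, ha]

lemma zeroBlocks_add_self {k : ℕ} (hk : 0 < k) (l : List α) (r : ℕ) :
    zeroBlocks k (r + k) l = zeroBlocks k r l + 1 := by
  induction l generalizing r with
  | nil => simp [Nat.add_div_right _ hk]
  | cons a l ih =>
    by_cases ha : a = 0
    · subst ha
      simp only [zeroBlocks_cons_zero, ← ih, Nat.add_right_comm]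
    · simp only [zeroBlocks_cons_of_ne_zero k _ ha, Nat.add_div_right _ hk]
      omega

lemma zeroBlocks_replicate_append (k : ℕ) (m r : ℕ) (l : List α) :
    zeroBlocks k r (List.replicate m 0 ++ l) = zeroBlocks k (r + m) l := by
  induction m generalizing r with
  | zero => rfl
  | succ m ih => simp [List.replicate_succ, ih, Nat.add_right_comm, Nat.add_assoc]

lemma zeroBlocks_insert_replicate {k : ℕ} (hk : 0 < k) (u v : List α) (r : ℕ) :
    zeroBlocks k r (u ++ List.replicate k 0 ++ v) = zeroBlocks k r (u ++ v) + 1 := by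
  induction u generalizing r with
  | nil => simp [zeroBlocks_replicate_append, zeroBlocks_add_self hk]
  | cons a u ih =>
    by_cases ha : a = 0
    · subst ha
      simpa using ih (r + 1)
    · simp only [List.cons_append, zeroBlocks_cons_of_ne_zero k _ ha, ih]
      omega

lemma replicate_infix_of_zeroBlocks_pos {k : ℕ} (l : List α) (r : ℕ)
    (h : 0 < zeroBlocks k r l) : List.replicate k 0 <:+: List.replicate r 0 ++ l := by
  have long_run : ∀ r, k ≤ r → ∀ l : List α,
      List.replicate k 0 <:+: List.replicate r 0 ++ l := by
    intro r hkr l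
    rw [← Nat.add_sub_cancel' hkr, List.replicate_add, List.append_assoc]
    exact (List.prefix_append _ _).isInfix
  induction l generalizing r with
  | nil => exact long_run r (Nat.div_pos_iff.mp h).2 []
  | cons a l ih =>
    by_cases ha : a = 0
    · subst ha
      simpa [List.replicate_succ'] using ih (r + 1) (by simpa using h)
    · by_cases hkr : k ≤ r
      · exact long_run r hkr _
      rw [zeroBlocks_cons_of_ne_zero k _ ha, Nat.div_eq_of_lt (by omega), zero_add] at h
      exact (List.infix_cons (by simpa using ih 0 h)).trans (List.suffix_append _ _).isInfix

end ZeroBlocks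

section Duplication

variable {R : Type} [Ring R]

lemma phiBar_eq_zipWith (k : ℕ) (x : List R) :
    phiBar k x = List.zipWith (· - ·) (x.drop k) x := by
  apply List.ext_getElem
  · simp [phiBar]
  · intro j h₁ _
    have hj : j < x.length - k := by simpa [phiBar] using h₁
    simp [phiBar, Nat.add_comm, List.getElem?_eq_getElem (show k + j < x.length by omega),
      List.getElem?_eq_getElem (show j < x.length by omega)]

lemma phiBar_append_window {k : ℕ} (x y w : List R) (hy : y.length = k) :
    phiBar k (x ++ y ++ w) =
      List.zipWith (· - ·) ((x ++ y).drop k) x ++ List.zipWith (· - ·) w (y ++ w) := by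
  rw [phiBar_eq_zipWith, List.drop_append_of_le_length (by simp [hy]), List.append_assoc x y w,
    List.zipWith_append (by simp [hy])]

lemma zipWith_sub_self (l : List R) :
    List.zipWith (· - ·) l l = List.replicate l.length 0 := by
  simp [List.zipWith_self]

lemma eq_of_zipWith_sub_eq_replicate {l₁ l₂ : List R} (hlen : l₁.length = l₂.length)
    (h : List.zipWith (· - ·) l₁ l₂ = List.replicate l₁.length 0) : l₁ = l₂ := by
  induction l₁ generalizing l₂ with
  | nil => exact (List.length_eq_zero_iff.mp hlen.symm).symm
  | cons a l₁ ih =>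
    obtain ⟨b, l₂, rfl⟩ := List.exists_cons_of_length_eq_add_one hlen.symm
    simp only [List.zipWith_cons_cons, List.length_cons, List.replicate_succ,
      List.cons.injEq, sub_eq_zero] at h hlen
    rw [h.1, ih (by omega) h.2]

lemma Dup.phiBar_eq {k : ℕ} {a b : List R} (h : Dup k a b) :
    ∃ u v : List R, phiBar k a = u ++ v ∧ phiBar k b = u ++ List.replicate k 0 ++ v := by
  obtain ⟨x, y, z, hy, rfl, rfl⟩ := h
  refine ⟨_, _, phiBar_append_window x y z hy, ?_⟩
  rw [List.append_assoc (x ++ y), phiBar_append_window x y _ hy, List.zipWith_append rfl,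
    zipWith_sub_self, hy, List.append_assoc]

lemma exists_dup_of_replicate_infix_phiBar {k : ℕ} {a : List R}
    (h : List.replicate k 0 <:+: phiBar k a) : ∃ c, Dup k c a := by
  obtain ⟨u, v, huv⟩ := h
  have hlen : a.length = u.length + k + k + v.length := by
    have := congrArg List.length huv
    simp only [phiBar, List.length_append, List.length_replicate, List.length_map,
      List.length_range] at this
    omega
  have split : ∀ (n : ℕ) (l : List R), n ≤ l.length →
      ∃ l₁ l₂, l = l₁ ++ l₂ ∧ l₁.length = n := fun n l h =>
    ⟨l.take n, l.drop n, (List.take_append_drop n l).symm, List.length_take_of_le h⟩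
  obtain ⟨x, a, rfl, hx⟩ := split u.length a (by omega)
  obtain ⟨y, a, rfl, hy⟩ := split k a (by simp only [List.length_append] at hlen; omega)
  obtain ⟨y', z, rfl, hy'⟩ := split k a (by simp only [List.length_append] at hlen; omega)
  refine ⟨x ++ y ++ z, x, y, z, hy, rfl, ?_⟩
  rw [← List.append_assoc x, phiBar_append_window x y _ hy, List.zipWith_append (by omega),
    List.append_assoc u] at huv
  obtain ⟨-, hrest⟩ := List.append_inj huv.symm (by simp [hx, hy])
  obtain ⟨hzero, -⟩ := List.append_inj hrest (by simp [hy, hy'])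
  rw [eq_of_zipWith_sub_eq_replicate (hy'.trans hy.symm) (by rw [hzero, hy'])]
  simp [List.append_assoc]

end Duplication

section Root

variable {R : Type}

lemma Dup.length_eq {k : ℕ} {a b : List R} (h : Dup k a b) : b.length = a.length + k := by
  obtain ⟨x, y, z, hy, rfl, rfl⟩ := h
  simp only [List.length_append, hy]
  omega

lemma Dup.le_length {k : ℕ} {a b : List R} (h : Dup k a b) : k ≤ a.length := by
  obtain ⟨x, y, z, hy, rfl, -⟩ := h
  simp only [List.length_append, hy]
  omega

lemma DescN.length_eq {k t : ℕ} {a b : List R} (h : DescN k t a b) :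
    b.length = a.length + k * t := by
  induction t generalizing b with
  | zero => cases h; simp
  | succ t ih =>
    obtain ⟨c, hc, hdup⟩ := h
    rw [hdup.length_eq, ih hc, Nat.mul_succ, Nat.add_assoc]

lemma mem_dStar_self (k : ℕ) (x : List R) : x ∈ DStar k x :=
  Set.mem_iUnion.mpr ⟨0, rfl⟩

lemma exists_irred_mem_dStar {k : ℕ} (hk : 0 < k) {x : List R} (hx : k ≤ x.length) :
    ∃ z, Irred k z ∧ x ∈ DStar k z := by
  induction x using WellFounded.induction (measure List.length).wf with
  | _ x ih =>
  by_cases hirr : Irred k x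
  · exact ⟨x, hirr, mem_dStar_self k x⟩
  obtain ⟨z, hz, hzx⟩ : ∃ z, x ∈ DStar k z ∧ z ≠ x := by
    simpa [Irred, hx] using hirr
  obtain ⟨t, ht⟩ := Set.mem_iUnion.mp hz
  obtain _ | t := t
  · exact absurd ht hzx
  obtain ⟨c, -, hdup⟩ := ht
  obtain ⟨w, hw, hcw⟩ := ih c (by have := hdup.length_eq; show c.length < x.length; omega)
    hdup.le_length
  obtain ⟨s, hs⟩ := Set.mem_iUnion.mp hcw
  exact ⟨w, hw, Set.mem_iUnion.mpr ⟨s + 1, c, hs, hdup⟩⟩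

variable [Ring R] [DecidableEq R]

lemma DescN.zeroBlocks_phiBar {k t : ℕ} (hk : 0 < k) {a b : List R} (h : DescN k t a b) :
    zeroBlocks k 0 (phiBar k b) = zeroBlocks k 0 (phiBar k a) + t := by
  induction t generalizing b with
  | zero => cases h; rfl
  | succ t ih =>
    obtain ⟨c, hc, hdup⟩ := h
    obtain ⟨u, v, hc', hb⟩ := hdup.phiBar_eq
    rw [hb, zeroBlocks_insert_replicate hk, ← hc', ih hc, Nat.add_assoc]

lemma Irred.zeroBlocks_phiBar_eq_zero {k : ℕ} (hk : 0 < k) {x : List R} (h : Irred k x) :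
    zeroBlocks k 0 (phiBar k x) = 0 := by
  by_contra hpos
  obtain ⟨c, hc⟩ := exists_dup_of_replicate_infix_phiBar
    (by simpa using replicate_infix_of_zeroBlocks_pos _ 0 (Nat.pos_of_ne_zero hpos))
  have hcx : c = x := h.2 c (Set.mem_iUnion.mpr ⟨1, c, rfl, hc⟩)
  have := hc.length_eq
  rw [hcx] at this
  omega

lemma rr_eq_zeroBlocks {k : ℕ} (hk : 0 < k) {x : List R} (hx : k ≤ x.length) :
    rr k x = zeroBlocks k 0 (phiBar k x) := by
  have hex := exists_irred_mem_dStar hk hx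
  obtain ⟨hirr, hmem⟩ : Irred k (rt k x) ∧ x ∈ DStar k (rt k x) := by
    rw [rt, dif_pos hex]
    exact hex.choose_spec
  obtain ⟨t, ht⟩ := Set.mem_iUnion.mp hmem
  rw [rr, ht.length_eq, ht.zeroBlocks_phiBar hk, hirr.zeroBlocks_phiBar_eq_zero hk,
    Nat.add_sub_cancel_left, Nat.mul_div_cancel_left _ hk, Nat.zero_add]

end Root

section Counting

variable {R : Type} [Ring R]

def windowDiff (k : ℕ) {n : ℕ} (f : Fin n → R) : Fin (n - k) → R :=
  fun i => f ⟨i + k, by omega⟩ - f ⟨i, by omega⟩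

lemma phiBar_ofFn (k : ℕ) {n : ℕ} (f : Fin n → R) :
    phiBar k (List.ofFn f) = List.ofFn (windowDiff k f) := by
  apply List.ext_getElem
  · simp [phiBar]
  · intro j h₁ h₂
    simp only [List.length_ofFn] at h₂
    simp [phiBar, windowDiff, List.getD_eq_getElem?_getD, List.getElem?_ofFn,
      show j + k < n by omega, show j < n by omega]

lemma prefix_windowDiff_injective {k n : ℕ} (hk : 0 < k) (hkn : k ≤ n) :
    Function.Injective fun f : Fin n → R =>
      (fun i : Fin k => f (Fin.castLE hkn i), windowDiff k f) := by
  intro f g hfg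
  simp only [Prod.mk.injEq, funext_iff] at hfg
  obtain ⟨hpre, hdiff⟩ := hfg
  suffices ∀ m (hm : m < n), f ⟨m, hm⟩ = g ⟨m, hm⟩ from funext fun i => this i i.2
  intro m
  induction m using Nat.strong_induction_on with
  | _ m ih =>
  intro hm
  by_cases hmk : m < k
  · exact hpre ⟨m, hmk⟩
  have hd : f ⟨m, hm⟩ - f ⟨m - k, by omega⟩ = g ⟨m, hm⟩ - g ⟨m - k, by omega⟩ := by
    simpa [windowDiff, Nat.sub_add_cancel (not_lt.mp hmk)] using hdiff ⟨m - k, by omega⟩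
  rwa [ih (m - k) (by omega), sub_left_inj] at hd

lemma prefix_windowDiff_bijective [Fintype R] {k n : ℕ} (hk : 0 < k) (hkn : k ≤ n) :
    Function.Bijective fun f : Fin n → R =>
      (fun i : Fin k => f (Fin.castLE hkn i), windowDiff k f) := by
  rw [Fintype.bijective_iff_injective_and_card]
  refine ⟨prefix_windowDiff_injective hk hkn, ?_⟩
  simp only [Fintype.card_prod, Fintype.card_fun, Fintype.card_fin, ← pow_add,
    Nat.add_sub_cancel' hkn]

lemma sum_phiBar_ofFn [Fintype R] {M : Type*} [AddCommMonoid M] (F : List R → M) {k n : ℕ}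
    (hk : 0 < k) (hkn : k ≤ n) :
    ∑ f : Fin n → R, F (phiBar k (List.ofFn f)) =
      Fintype.card R ^ k • ∑ d : Fin (n - k) → R, F (List.ofFn d) := by
  simp only [phiBar_ofFn]
  rw [Fintype.sum_bijective _ (prefix_windowDiff_bijective hk hkn)
    (fun f => F (List.ofFn (windowDiff k f))) (fun p => F (List.ofFn p.2)) fun f => rfl,
    Fintype.sum_prod_type]
  simp

end Counting

section Asymptotics

/-- The exact solution of the first-letter recurrence (`potential_succ`); it makes the error term
in `abs_zeroBlocksSum_sub_le` satisfy a homogeneous recurrence. -/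
noncomputable def potential (q : ℝ) (k r : ℕ) : ℝ := (r / k : ℕ) + q ^ (r % k) / (q ^ k - 1)

lemma potential_succ {q : ℝ} {k : ℕ} (hk : 0 < k) (hq : q ^ k ≠ 1) (r : ℕ) :
    potential q k (r + 1) + (q - 1) * ((r / k : ℕ) + potential q k 0) =
      q * potential q k r + (q - 1) / (q ^ k - 1) := by
  have hQ : q ^ k - 1 ≠ 0 := sub_ne_zero.mpr hq
  obtain ⟨a, m, hm, rfl⟩ : ∃ a m, m < k ∧ r = k * a + m :=
    ⟨r / k, r % k, Nat.mod_lt r hk, (Nat.div_add_mod r k).symm⟩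
  simp only [potential, Nat.mul_add_div hk, Nat.mul_add_mod, Nat.div_eq_of_lt hm,
    Nat.mod_eq_of_lt hm, Nat.zero_div, Nat.zero_mod, add_zero, pow_zero, Nat.cast_zero, zero_add]
  rcases Nat.lt_or_ge (m + 1) k with hm1 | hm1
  · rw [Nat.add_assoc, Nat.mul_add_div hk, Nat.mul_add_mod, Nat.div_eq_of_lt hm1,
      Nat.mod_eq_of_lt hm1, add_zero]
    field_simp
    ring
  · obtain rfl : k = m + 1 := by omega
    rw [Nat.add_assoc, ← Nat.mul_succ, Nat.mul_div_cancel_left _ hk, Nat.mul_mod_right]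
    push_cast
    field_simp
    ring

lemma abs_potential_sub_div_le {q : ℝ} (hq : 2 ≤ q) {k : ℕ} (hk : 0 < k) (r : ℕ) :
    |potential q k r - (r / k : ℕ)| ≤ 1 := by
  have hpow : q ^ (r % k) + 1 ≤ q ^ k := by
    calc q ^ (r % k) + 1 ≤ q ^ (k - 1) + q ^ (k - 1) :=
          add_le_add (pow_le_pow_right₀ (by linarith) (by have := Nat.mod_lt r hk; omega))
            (one_le_pow₀ (by linarith))
      _ ≤ q * q ^ (k - 1) := by nlinarith [pow_nonneg (show 0 ≤ q by linarith) (k - 1)]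
      _ = q ^ k := by rw [← pow_succ', Nat.sub_add_cancel hk]
  have hpos : 0 < q ^ (r % k) := by positivity
  rw [potential, add_sub_cancel_left, abs_of_pos (by apply div_pos <;> linarith),
    div_le_one (by linarith)]
  linarith

variable (α : Type*) [Fintype α] [Zero α] [DecidableEq α]

noncomputable def zeroBlocksSum (k r N : ℕ) : ℝ :=
  ∑ d : Fin N → α, (zeroBlocks k r (List.ofFn d) : ℝ)

lemma zeroBlocksSum_zero (k r : ℕ) : zeroBlocksSum α k r 0 = (r / k : ℕ) := by
  simp [zeroBlocksSum]

lemma zeroBlocksSum_succ (k r N : ℕ) :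
    zeroBlocksSum α k r (N + 1) = zeroBlocksSum α k (r + 1) N +
      ((Fintype.card α : ℝ) - 1) *
        ((Fintype.card α : ℝ) ^ N * (r / k : ℕ) + zeroBlocksSum α k 0 N) := by
  have hcons : ∀ p : α × (Fin N → α),
      List.ofFn (Fin.consEquiv (fun _ => α) p) = p.1 :: List.ofFn p.2 := fun p => by
    simp [List.ofFn_succ, Fin.consEquiv_apply]
  rw [zeroBlocksSum, ← (Fin.consEquiv fun _ => α).sum_comp, Fintype.sum_prod_type,
    Fintype.sum_eq_add_sum_compl 0]
  simp only [hcons, zeroBlocks_cons_zero]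
  have hne : ∀ a ∈ ({0}ᶜ : Finset α),
      ∑ d : Fin N → α, (zeroBlocks k r (a :: List.ofFn d) : ℝ) =
        (Fintype.card α : ℝ) ^ N * (r / k : ℕ) + zeroBlocksSum α k 0 N := by
    intro a ha
    simp [zeroBlocks_cons_of_ne_zero k r (by simpa using ha), Finset.sum_add_distrib,
      zeroBlocksSum]
  rw [Finset.sum_congr rfl hne, Finset.sum_const, Finset.card_compl, Finset.card_singleton,
    nsmul_eq_mul, Nat.cast_sub Fintype.card_pos, Nat.cast_one]
  rfl

lemma abs_zeroBlocksSum_sub_le (hq : 2 ≤ Fintype.card α) {k : ℕ} (hk : 0 < k) (N r : ℕ) :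
    |zeroBlocksSum α k r N - ((((Fintype.card α : ℝ) - 1) /
        ((Fintype.card α : ℝ) * ((Fintype.card α : ℝ) ^ k - 1))) * N +
          potential (Fintype.card α) k r) * (Fintype.card α : ℝ) ^ N|
      ≤ (Fintype.card α : ℝ) ^ N := by
  have hq2 : (2 : ℝ) ≤ Fintype.card α := by exact_mod_cast hq
  set q : ℝ := (Fintype.card α : ℝ)
  set c : ℝ := (q - 1) / (q * (q ^ k - 1))
  have hqk : 1 < q ^ k := one_lt_pow₀ (by linarith) hk.ne'
  have hc : q * c = (q - 1) / (q ^ k - 1) := by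
    simp only [c]
    field_simp
  induction N generalizing r with
  | zero =>
    rw [zeroBlocksSum_zero, abs_sub_comm]
    simpa using abs_potential_sub_div_le hq2 hk r
  | succ N ih =>
    have hstep : zeroBlocksSum α k r (N + 1) - (c * ↑(N + 1) + potential q k r) * q ^ (N + 1) =
        (zeroBlocksSum α k (r + 1) N - (c * N + potential q k (r + 1)) * q ^ N) +
          (q - 1) * (zeroBlocksSum α k 0 N - (c * N + potential q k 0) * q ^ N) := by
      rw [zeroBlocksSum_succ]
      push_cast
      linear_combination (q ^ N) * (potential_succ hk hqk.ne' r) - (q ^ N) * hc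
    calc _ = |_ + _| := by rw [hstep]
      _ ≤ q ^ N + (q - 1) * q ^ N := by
        refine (abs_add_le _ _).trans (add_le_add (ih (r + 1)) ?_)
        rw [abs_mul, abs_of_nonneg (by linarith)]
        exact mul_le_mul_of_nonneg_left (ih 0) (by linarith)
      _ = q ^ (N + 1) := by ring

end Asymptotics

theorem statement1 (hq : 2 ≤ Fintype.card S) (k : ℕ) (hk : 2 ≤ k) :
    ∃ B : ℝ, ∀ n : ℕ, k ≤ n →
      |(1 / (Fintype.card S : ℝ) ^ n) * ∑ f : Fin n → S, (rr k (List.ofFn f) : ℝ)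
          - (((Fintype.card S : ℝ) - 1) /
              ((Fintype.card S : ℝ) * ((Fintype.card S : ℝ) ^ k - 1))) * ((n : ℝ) - (k : ℝ))|
        ≤ B := by
  have hk₀ : 0 < k := by omega
  refine ⟨2, fun n hn => ?_⟩
  obtain ⟨N, rfl⟩ := Nat.exists_eq_add_of_le hn
  have hsum : ∑ f : Fin (k + N) → S, (rr k (List.ofFn f) : ℝ) =
      (Fintype.card S : ℝ) ^ k * zeroBlocksSum S k 0 N := by
    rw [Finset.sum_congr rfl fun f _ => by rw [rr_eq_zeroBlocks hk₀ (by simp)],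
      sum_phiBar_ofFn (fun l => (zeroBlocks k 0 l : ℝ)) hk₀ hn, Nat.add_sub_cancel_left,
      nsmul_eq_mul, Nat.cast_pow]
    rfl
  have hE := abs_zeroBlocksSum_sub_le S hq hk₀ N 0
  have hP := abs_potential_sub_div_le (q := Fintype.card S) (by exact_mod_cast hq) hk₀ 0
  set q : ℝ := (Fintype.card S : ℝ)
  set c : ℝ := (q - 1) / (q * (q ^ k - 1))
  have hq₀ : q ≠ 0 := by positivity
  have hqN : 0 < q ^ N := by positivity
  have hsplit : 1 / q ^ (k + N) * (q ^ k * zeroBlocksSum S k 0 N) - c * ((↑(k + N) : ℝ) - k) =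
      (zeroBlocksSum S k 0 N - (c * N + potential q k 0) * q ^ N) / q ^ N + potential q k 0 := by
    push_cast
    field_simp
    ring
  rw [hsum, hsplit]
  calc _ ≤ |(zeroBlocksSum S k 0 N - (c * N + potential q k 0) * q ^ N) / q ^ N| +
        |potential q k 0| := abs_add_le _ _
    _ ≤ 1 + 1 := by
      gcongr
      · rwa [abs_div, abs_of_pos hqN, div_le_one hqN]
      · simpa using hP
    _ = 2 := by norm_num

end TandemDup
end

section
/- Let w, r, t, m ∈ ℕ, let u_1, …, u_m ∈ Δ^w_r, and denote u := ∨_{i=1}^m u_i (the coordinatewise maximum). Then |S̄_t(u_1,…,u_m)| = 0 if ‖u‖₁ > r + t, and |S̄_t(u_1,…,u_m)| = C(w + t + r − ‖u‖₁, w) otherwise, where C(·,·) denotes the binomial coefficient. -/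
open scoped BigOperators Classical
open Filter

namespace TandemDup

variable {S : Type} [Fintype S] [DecidableEq S] [Ring S]

lemma card_sum_eq (k N : ℕ) :
    Nat.card {v : Fin k → ℕ // ∑ j, v j = N} = (N + k - 1).choose N := by
  have e : Sym (Fin k) N ≃ {v : Fin k → ℕ // ∑ j, v j = N} := by
    refine Equiv.subtypeEquiv ((Multiset.toFinsupp (α := Fin k)).toEquiv.trans
      Finsupp.equivFunOnFinite) ?_
    intro m
    rw [← Multiset.sum_count_eq_card (s := Finset.univ) (m := m) (fun a _ => Finset.mem_univ a)]
    simp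
  rw [Nat.card_congr e.symm, Nat.card_eq_fintype_card, Sym.card_sym_eq_choose,
    Fintype.card_fin, Nat.add_comm]

theorem statement4 (w r t m : ℕ) (hm : 1 ≤ m)
    (u : Fin m → (Fin (w + 1) → ℕ)) (hu : ∀ i, ∑ j, u i j = r) :
    (Sbar w t u).ncard =
      if r + t < ∑ j, Finset.univ.sup (fun i => u i j) then 0
      else Nat.choose (w + t + r - ∑ j, Finset.univ.sup (fun i => u i j)) w := by
  set U : Fin (w + 1) → ℕ := fun j => Finset.univ.sup (fun i => u i j) with hU
  set T : ℕ := ∑ j, U j with hT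
  have i0 : Fin m := ⟨0, hm⟩
  have hset : Sbar w t u = {v | (∀ j, U j ≤ v j) ∧ ∑ j, v j = r + t} := by
    ext v
    simp only [Sbar, Set.mem_iInter, Set.mem_setOf_eq]
    constructor
    · intro h
      refine ⟨fun j => Finset.sup_le fun i _ => (h i).1 j, ?_⟩
      have hle := (h i0).1
      have hsum : ∑ j, (v j - u i0 j) = ∑ j, v j - ∑ j, u i0 j :=
        Finset.sum_tsub_distrib _ (fun j _ => hle j)
      have hrle : r ≤ ∑ j, v j := by
        rw [← hu i0]; exact Finset.sum_le_sum (fun j _ => hle j)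
      have := (h i0).2
      rw [hsum, hu i0] at this
      omega
    · intro ⟨h1, h2⟩ i
      have hle : u i ≤ v := fun j =>
        le_trans (Finset.le_sup (f := fun i => u i j) (Finset.mem_univ i)) (h1 j)
      refine ⟨hle, ?_⟩
      rw [Finset.sum_tsub_distrib _ (fun j _ => hle j), h2, hu i]
      omega
  by_cases hc : r + t < T
  · rw [if_pos hc]
    have : Sbar w t u = ∅ := by
      rw [hset]
      ext v
      simp only [Set.mem_setOf_eq, Set.mem_empty_iff_false, iff_false, not_and]
      intro h1 h2
      have : T ≤ ∑ j, v j := Finset.sum_le_sum (fun j _ => h1 j)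
      omega
    rw [this, Set.ncard_empty]
  · rw [if_neg hc]
    push_neg at hc
    set N : ℕ := r + t - T with hN
    have e : (Sbar w t u) ≃ {x : Fin (w + 1) → ℕ // ∑ j, x j = N} := by
      rw [hset]
      refine ⟨fun v => ⟨fun j => v.1 j - U j, ?_⟩, fun x => ⟨fun j => x.1 j + U j, ?_⟩, ?_, ?_⟩
      · obtain ⟨v, h1, h2⟩ := v
        rw [Finset.sum_tsub_distrib _ (fun j _ => h1 j)]
        simp only [h2, ← hT, hN]
      · obtain ⟨x, hx⟩ := x
        refine ⟨fun j => Nat.le_add_left _ _, ?_⟩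
        rw [Finset.sum_add_distrib, hx, ← hT]
        omega
      · intro ⟨v, h1, h2⟩
        ext j
        show v j - U j + U j = v j
        exact Nat.sub_add_cancel (h1 j)
      · intro ⟨x, hx⟩
        ext j
        show x j + U j - U j = x j
        omega
    rw [← Nat.card_coe_set_eq, Nat.card_congr e, card_sum_eq]
    have h1 : N + (w + 1) - 1 = N + w := by omega
    have h2 : w + t + r - T = w + N := by omega
    rw [h1, h2, Nat.add_comm w N, Nat.choose_symm_add]

end TandemDup
end

section
/- Let w, r, t ∈ ℕ and 2 ≤ m ≤ |Δ^w_r|. Then N̄_t(m,w,r) = C(w + t − σ(m,w,r), w), where the binomial coefficient is taken to be 0 when t < σ(m,w,r). -/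
open scoped BigOperators Classical
open Filter

namespace TandemDup

variable {S : Type} [Fintype S] [DecidableEq S] [Ring S]

/-! For `uᵢ` of height `r`, `S̄_t(u)` is the set of `v ≥ ⋁ᵢ uᵢ` with `‖v‖₁ = r + t`, a
translate of the simplex `Δ^w_{t - s}` where `s = ‖⋁ᵢ uᵢ‖₁ - r`. Its size `C(w + t - s, w)` is
antitone in `s`, so the maximum over all families is attained by a family realising `σ(m, w, r)`;
such families exist as soon as `m ≤ |Δ^w_r|`. -/

section Simplex

variable {ι : Type*} [Fintype ι]

lemma natCard_sum_eq (n : ℕ) :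
    Nat.card {v : ι → ℕ // ∑ i, v i = n} = (Fintype.card ι + n - 1).choose n := by
  rw [← Nat.card_congr (Sym.equivNatSumOfFintype ι n), Sym.natCard_sym_eq_choose,
    Nat.card_eq_fintype_card]

lemma ncard_setOf_le_sum_eq_add (a : ι → ℕ) (n : ℕ) :
    {v : ι → ℕ | a ≤ v ∧ ∑ i, v i = ∑ i, a i + n}.ncard
      = (Fintype.card ι + n - 1).choose n := by
  have himage : {v : ι → ℕ | a ≤ v ∧ ∑ i, v i = ∑ i, a i + n}
      = (a + ·) '' {d | ∑ i, d i = n} := by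
    ext v
    constructor
    · rintro ⟨hle, hsum⟩
      refine ⟨v - a, ?_, add_tsub_cancel_of_le hle⟩
      change ∑ i, (v i - a i) = n
      rw [Finset.sum_tsub_distrib _ fun i _ => hle i, hsum, add_tsub_cancel_left]
    · rintro ⟨d, hd, rfl⟩
      refine ⟨fun i => Nat.le_add_right _ _, ?_⟩
      simp only [Pi.add_apply, Finset.sum_add_distrib]
      rw [hd]
  rw [himage, Set.ncard_image_of_injective _ (add_right_injective a)]
  exact natCard_sum_eq n

lemma setOf_le_sum_eq_eq_empty {a : ι → ℕ} {N : ℕ} (hN : N < ∑ i, a i) :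
    {v : ι → ℕ | a ≤ v ∧ ∑ i, v i = N} = ∅ :=
  Set.eq_empty_of_forall_notMem fun _ ⟨hle, hsum⟩ =>
    hN.not_ge (hsum ▸ Finset.sum_le_sum fun i _ => hle i)

end Simplex

lemma antitone_ite_choose (w t : ℕ) :
    Antitone fun s => if s ≤ t then (w + t - s).choose w else 0 := by
  intro s s' hss'
  dsimp only
  split_ifs
  · exact Nat.choose_le_choose w (by omega)
  · omega
  · exact Nat.zero_le _
  · exact le_rfl

section Sbar

variable {w r t m : ℕ}

lemma ncard_setOf_le_sum_eq {a : Fin (w + 1) → ℕ} {s : ℕ} (ha : ∑ j, a j = r + s) :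
    {v : Fin (w + 1) → ℕ | a ≤ v ∧ ∑ j, v j = r + t}.ncard
      = if s ≤ t then (w + t - s).choose w else 0 := by
  split_ifs with hst
  · have hrt : r + t = ∑ j, a j + (t - s) := by omega
    rw [hrt, ncard_setOf_le_sum_eq_add, Fintype.card_fin,
      show w + 1 + (t - s) - 1 = w + t - s by omega]
    exact Nat.choose_symm_of_eq_add (by omega)
  · rw [setOf_le_sum_eq_eq_empty (by omega), Set.ncard_empty]

lemma Sbar_eq [NeZero m] {u : Fin m → Fin (w + 1) → ℕ} (hu : ∀ i, ∑ j, u i j = r) :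
    Sbar w t u = {v | Finset.univ.sup u ≤ v ∧ ∑ j, v j = r + t} := by
  ext v
  simp only [Sbar, Set.mem_iInter, Set.mem_ofPred_eq, Finset.sup_le_iff, Finset.mem_univ,
    true_implies]
  have hdist : ∀ i, u i ≤ v → (∑ j, (v j - u i j) = t ↔ ∑ j, v j = r + t) := by
    intro i hle
    have hr : r ≤ ∑ j, v j := hu i ▸ Finset.sum_le_sum fun j _ => hle j
    rw [Finset.sum_tsub_distrib _ fun j _ => hle j, hu i]
    omega
  constructor
  · intro h
    exact ⟨fun i => (h i).1, (hdist 0 (h 0).1).1 (h 0).2⟩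
  · rintro ⟨hle, hsum⟩ i
    exact ⟨hle i, (hdist i (hle i)).2 hsum⟩

lemma exists_sum_sup_eq [NeZero m] {u : Fin m → Fin (w + 1) → ℕ} (hu : ∀ i, ∑ j, u i j = r) :
    ∃ s, ∑ j, (Finset.univ.sup fun i => u i j) = r + s :=
  le_iff_exists_add.1 <| hu 0 ▸ Finset.sum_le_sum fun j _ =>
    Finset.le_sup (f := fun i => u i j) (Finset.mem_univ 0)

lemma ncard_Sbar [NeZero m] {u : Fin m → Fin (w + 1) → ℕ} (hu : ∀ i, ∑ j, u i j = r) {s : ℕ}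
    (hs : ∑ j, (Finset.univ.sup fun i => u i j) = r + s) :
    (Sbar w t u).ncard = if s ≤ t then (w + t - s).choose w else 0 := by
  rw [Sbar_eq hu]
  exact ncard_setOf_le_sum_eq (by simpa only [Finset.sup_apply] using hs)

lemma exists_injective_sum_eq (hm : m ≤ (r + w).choose r) :
    ∃ u : Fin m → Fin (w + 1) → ℕ, Function.Injective u ∧ ∀ i, ∑ j, u i j = r := by
  let : Fintype {v : Fin (w + 1) → ℕ // ∑ j, v j = r} :=
    Fintype.ofEquiv _ (Sym.equivNatSumOfFintype _ r)
  have hcard : Fintype.card (Fin m) ≤ Fintype.card {v : Fin (w + 1) → ℕ // ∑ j, v j = r} := by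
    rw [Fintype.card_fin, ← Nat.card_eq_fintype_card, natCard_sum_eq, Fintype.card_fin,
      show w + 1 + r - 1 = r + w by omega]
    exact hm
  obtain ⟨f⟩ := Function.Embedding.nonempty_of_card_le hcard
  exact ⟨fun i => f i, fun i j h => f.injective (Subtype.ext h), fun i => (f i).2⟩

lemma setOf_ncard_Sbar_eq_image [NeZero m] :
    {N | ∃ u : Fin m → Fin (w + 1) → ℕ, Function.Injective u ∧ (∀ i, ∑ j, u i j = r) ∧
        N = (Sbar w t u).ncard}
      = (fun s => if s ≤ t then (w + t - s).choose w else 0) ''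
        {s | ∃ u : Fin m → Fin (w + 1) → ℕ, Function.Injective u ∧ (∀ i, ∑ j, u i j = r) ∧
          (∑ j, Finset.univ.sup fun i => u i j) = r + s} := by
  ext N
  constructor
  · rintro ⟨u, hinj, hu, rfl⟩
    obtain ⟨s, hs⟩ := exists_sum_sup_eq hu
    exact ⟨s, ⟨u, hinj, hu, hs⟩, (ncard_Sbar hu hs).symm⟩
  · rintro ⟨s, ⟨u, hinj, hu, hs⟩, rfl⟩
    exact ⟨u, hinj, hu, (ncard_Sbar hu hs).symm⟩

end Sbar

theorem statement5 (w r t m : ℕ) (hm : 2 ≤ m) (hm' : m ≤ Nat.choose (r + w) r) :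
    Nbar t m w r =
      if sigma m w r ≤ t then Nat.choose (w + t - sigma m w r) w else 0 := by
  have : NeZero m := ⟨by omega⟩
  obtain ⟨u, hinj, hu⟩ := exists_injective_sum_eq hm'
  obtain ⟨s, hs⟩ := exists_sum_sup_eq hu
  rw [Nbar, setOf_ncard_Sbar_eq_image]
  refine ((antitone_ite_choose w t).map_csInf_of_continuousAt
    continuous_of_discreteTopology.continuousAt ?_).symm
  exact ⟨s, u, hinj, hu, hs⟩

end TandemDup
end

section
/- Let w, r, s ∈ ℕ. If s ≥ wr then μ(w,r,s) = |Δ^w_r| = C(r+w, r) and σ(C(r+w,r), w, r) = wr. If s < wr then σ(μ(w,r,s), w, r) = s. -/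
open scoped BigOperators Classical
open Filter

namespace TandemDup

variable {S : Type} [Fintype S] [DecidableEq S] [Ring S]

/-!
A family of `m` distinct points of `Δ^w_r` lies in `A_r` of its supremum, and any `m` points of
`A_r(u)` have their supremum below `u`; hence `σ(m, w, r)` is the least `s` with
`m ≤ μ(w, r, s)`. Moreover `s ↦ μ(w, r, s)` is strictly increasing on `[0, wr]`: while `s < wr`,
a maximiser `u` has a coordinate `u(j) < r`, and raising it by one adds to `A_r(u)` a point with
`j`-th coordinate `u(j) + 1`. For `s ≥ wr` some `u` has all coordinates at least `r`, and then
`A_r(u)` is all of `Δ^w_r`. Both parts of the theorem follow.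
-/

lemma exists_le_le_sum_eq {ι : Type*} [Fintype ι] {l u : ι → ℕ} (hlu : l ≤ u) {r : ℕ}
    (hl : ∑ i, l i ≤ r) (hu : r ≤ ∑ i, u i) : ∃ v, l ≤ v ∧ v ≤ u ∧ ∑ i, v i = r := by
  induction hd : ∑ i, u i - r generalizing u with
  | zero => exact ⟨u, hlu, le_rfl, by omega⟩
  | succ d ih =>
    obtain ⟨j, hj⟩ : ∃ j, l j < u j := by
      by_contra! H
      have := Finset.sum_le_sum fun i (_ : i ∈ Finset.univ) => H i
      omega
    have hju : Pi.single j 1 ≤ u := by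
      intro i
      rcases eq_or_ne i j with rfl | hi <;> simp [*]
      omega
    have hsum : ∑ i, (u - Pi.single j 1 : ι → ℕ) i = ∑ i, u i - 1 := by
      simp only [Pi.sub_apply]
      rw [Finset.sum_tsub_distrib _ fun i _ => hju i]
      simp
    obtain ⟨v, hlv, hvu, hv⟩ := ih (u := (u - Pi.single j 1 : ι → ℕ))
      (fun i => by rcases eq_or_ne i j with rfl | hi <;> simp [*, hlu i]; omega)
      (by omega) (by omega)
    exact ⟨v, hlv, hvu.trans tsub_le_self, hv⟩

section LowerBounds

variable {w r : ℕ}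

lemma lbs_subset_piAntidiag (u : Fin (w + 1) → ℕ) :
    lbs w r u ⊆ (Finset.univ.piAntidiag r : Finset (Fin (w + 1) → ℕ)) := fun v hv => by
  simpa [Finset.mem_piAntidiag] using hv.1

lemma lbs_finite (u : Fin (w + 1) → ℕ) : (lbs w r u).Finite :=
  (Finset.finite_toSet _).subset (lbs_subset_piAntidiag u)

lemma lbs_eq_piAntidiag {u : Fin (w + 1) → ℕ} (hu : ∀ j, r ≤ u j) :
    lbs w r u = (Finset.univ.piAntidiag r : Finset (Fin (w + 1) → ℕ)) := by
  refine (lbs_subset_piAntidiag u).antisymm fun v hv => ?_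
  have hv : ∑ j, v j = r := by simpa [Finset.mem_piAntidiag] using hv
  exact ⟨hv, fun j => (hv ▸ Finset.single_le_sum (fun _ _ => Nat.zero_le _)
    (Finset.mem_univ j)).trans (hu j)⟩

variable (w r) in
lemma card_piAntidiag_univ_fin :
    (Finset.univ.piAntidiag r : Finset (Fin (w + 1) → ℕ)).card = (r + w).choose r := by
  rw [← Finset.map_sym_eq_piAntidiag, Finset.card_map, Finset.sym_univ, Finset.card_univ,
    Sym.card_sym_eq_choose, Fintype.card_fin]
  simp [Nat.add_comm r w]

lemma ncard_lbs_le_choose (u : Fin (w + 1) → ℕ) : (lbs w r u).ncard ≤ (r + w).choose r := by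
  rw [← card_piAntidiag_univ_fin, ← Set.ncard_coe_finset]
  exact Set.ncard_le_ncard (lbs_subset_piAntidiag u)

end LowerBounds

section Mu

variable {w r s : ℕ}

lemma bddAbove_ncard_lbs (w r s : ℕ) :
    BddAbove {N : ℕ | ∃ u : Fin (w + 1) → ℕ, (∑ j, u j) = r + s ∧ N = (lbs w r u).ncard} :=
  ⟨(r + w).choose r, by rintro N ⟨u, -, rfl⟩; exact ncard_lbs_le_choose u⟩

lemma ncard_lbs_le_mu {u : Fin (w + 1) → ℕ} (hu : ∑ j, u j = r + s) :
    (lbs w r u).ncard ≤ mu w r s :=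
  le_csSup (bddAbove_ncard_lbs w r s) ⟨u, hu, rfl⟩

variable (w r s) in
lemma exists_ncard_lbs_eq_mu :
    ∃ u : Fin (w + 1) → ℕ, ∑ j, u j = r + s ∧ (lbs w r u).ncard = mu w r s := by
  have hne : {N : ℕ | ∃ u : Fin (w + 1) → ℕ, (∑ j, u j) = r + s ∧
      N = (lbs w r u).ncard}.Nonempty :=
    ⟨_, Pi.single 0 (r + s), by simp, rfl⟩
  obtain ⟨u, hu, hN⟩ := Nat.sSup_mem hne (bddAbove_ncard_lbs w r s)
  exact ⟨u, hu, hN.symm⟩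

lemma mu_pos : 0 < mu w r s := by
  obtain ⟨u, hu, hcard⟩ := exists_ncard_lbs_eq_mu w r s
  obtain ⟨v, -, hvu, hv⟩ :=
    exists_le_le_sum_eq (l := 0) (fun i => Nat.zero_le (u i)) (by simp) (hu ▸ le_self_add)
  rw [← hcard]
  exact (Set.ncard_pos (lbs_finite u)).2 ⟨v, hv, hvu⟩

lemma mu_eq_choose (h : w * r ≤ s) : mu w r s = (r + w).choose r := by
  obtain ⟨u, hu, hcard⟩ := exists_ncard_lbs_eq_mu w r s
  refine le_antisymm (hcard ▸ ncard_lbs_le_choose u) ?_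
  let u' : Fin (w + 1) → ℕ := fun j => r + (Pi.single 0 (s - w * r) : Fin (w + 1) → ℕ) j
  have hu' : ∑ j, u' j = r + s := by
    simp [u', Finset.sum_add_distrib, add_one_mul]
    omega
  calc (r + w).choose r = (lbs w r u').ncard := by
        rw [lbs_eq_piAntidiag fun j => Nat.le_add_right _ _, Set.ncard_coe_finset,
          card_piAntidiag_univ_fin]
    _ ≤ mu w r s := ncard_lbs_le_mu hu'

lemma mu_lt_mu_add_one (h : s < w * r) : mu w r s < mu w r (s + 1) := by
  obtain ⟨u, hu, hcard⟩ := exists_ncard_lbs_eq_mu w r s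
  obtain ⟨j, hj⟩ : ∃ j, u j < r := by
    by_contra! H
    have := Finset.sum_le_sum fun j (_ : j ∈ Finset.univ) => H j
    simp only [Finset.sum_const, Finset.card_univ, Fintype.card_fin, smul_eq_mul] at this
    nlinarith
  set u' : Fin (w + 1) → ℕ := u + Pi.single j 1
  have hu' : ∑ i, u' i = r + (s + 1) := by simp [u', Finset.sum_add_distrib, hu]; omega
  -- a point of `A_r(u')` exceeding `u` at `j`
  obtain ⟨v, hlv, hvu', hv⟩ := exists_le_le_sum_eq (l := Pi.single j (u j + 1)) (u := u')
    (fun i => by rcases eq_or_ne i j with rfl | hi <;> simp [u', *]) (by simp; omega) (by omega)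
  have hlt : lbs w r u ⊂ lbs w r u' := by
    refine (Set.ssubset_iff_of_subset fun x (hx : x ∈ lbs w r u) => ?_).2
      ⟨v, ⟨hv, hvu'⟩, fun hvu => ?_⟩
    · exact ⟨hx.1, hx.2.trans le_self_add⟩
    · have := (hlv j).trans (hvu.2 j)
      simp at this
  calc mu w r s = (lbs w r u).ncard := hcard.symm
    _ < (lbs w r u').ncard := Set.ncard_lt_ncard hlt (lbs_finite u')
    _ ≤ mu w r (s + 1) := ncard_lbs_le_mu hu'

lemma strictMonoOn_mu : StrictMonoOn (mu w r) (Set.Iic (w * r)) :=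
  strictMonoOn_Iic_of_lt_succ fun _ h => by simpa using mu_lt_mu_add_one h

end Mu

section Sigma

variable {w r m : ℕ}

lemma le_mu_of_injective {t : ℕ} {u : Fin m → Fin (w + 1) → ℕ} (hu : Function.Injective u)
    (hr : ∀ i, ∑ j, u i j = r) (ht : ∑ j, Finset.univ.sup (fun i => u i j) = r + t) :
    m ≤ mu w r t := by
  have hsub : Set.range u ⊆ lbs w r fun j => Finset.univ.sup fun i => u i j :=
    Set.range_subset_iff.2 fun i =>
      ⟨hr i, fun j => Finset.le_sup (f := fun i => u i j) (Finset.mem_univ i)⟩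
  calc m = (Set.range u).ncard := by rw [Set.ncard_range_of_injective hu, Nat.card_fin]
    _ ≤ _ := Set.ncard_le_ncard hsub (lbs_finite _)
    _ ≤ mu w r t := ncard_lbs_le_mu ht

lemma exists_injective_of_le_mu {s : ℕ} (hm : 0 < m) (h : m ≤ mu w r s) :
    ∃ t ≤ s, ∃ u : Fin m → Fin (w + 1) → ℕ, Function.Injective u ∧
      (∀ i, ∑ j, u i j = r) ∧ ∑ j, Finset.univ.sup (fun i => u i j) = r + t := by
  obtain ⟨u₀, hu₀, hcard⟩ := exists_ncard_lbs_eq_mu w r s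
  have hfin := lbs_finite (w := w) (r := r) u₀
  have hmF : m ≤ hfin.toFinset.card := by rwa [← Set.ncard_eq_toFinset_card _ hfin, hcard]
  let u : Fin m ↪ (Fin (w + 1) → ℕ) := (Fin.castLEEmb hmF).trans <|
    hfin.toFinset.equivFin.symm.toEmbedding.trans (Function.Embedding.subtype _)
  have hu : ∀ i, u i ∈ lbs w r u₀ := fun i => hfin.mem_toFinset.1 (Subtype.prop _)
  let U : Fin (w + 1) → ℕ := fun j => Finset.univ.sup fun i => u i j
  have huU : ∀ i, u i ≤ U := fun i j => Finset.le_sup (f := fun i => u i j) (Finset.mem_univ i)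
  have hUu₀ : U ≤ u₀ := fun j => Finset.sup_le fun i _ => (hu i).2 j
  have hlower : r ≤ ∑ j, U j :=
    (hu ⟨0, hm⟩).1 ▸ Finset.sum_le_sum fun j _ => huU ⟨0, hm⟩ j
  have hupper : ∑ j, U j ≤ r + s := hu₀ ▸ Finset.sum_le_sum fun j _ => hUu₀ j
  exact ⟨∑ j, U j - r, Nat.sub_le_iff_le_add'.2 hupper, u, u.injective, fun i => (hu i).1,
    (Nat.add_sub_cancel' hlower).symm⟩

lemma sigma_eq_of_le_mu {s : ℕ} (hm : 0 < m) (h : m ≤ mu w r s)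
    (hlt : ∀ t < s, mu w r t < m) : sigma m w r = s := by
  obtain ⟨t, hts, u, hu, hr, ht⟩ := exists_injective_of_le_mu hm h
  obtain rfl : t = s :=
    hts.antisymm (not_lt.1 fun hst => (hlt t hst).not_ge (le_mu_of_injective hu hr ht))
  refine le_antisymm (Nat.sInf_le ⟨u, hu, hr, ht⟩) (le_csInf ⟨t, u, hu, hr, ht⟩ ?_)
  rintro t' ⟨u', hu', hr', ht'⟩
  exact not_lt.1 fun ht't => (hlt t' ht't).not_ge (le_mu_of_injective hu' hr' ht')

end Sigma

theorem statement6 (w r s : ℕ) :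
    (w * r ≤ s →
      mu w r s = Nat.choose (r + w) r ∧ sigma (Nat.choose (r + w) r) w r = w * r) ∧
    (s < w * r → sigma (mu w r s) w r = s) := by
  refine ⟨fun hs => ⟨mu_eq_choose hs, ?_⟩, fun hs => ?_⟩
  · have hmu : mu w r (w * r) = (r + w).choose r := mu_eq_choose le_rfl
    refine sigma_eq_of_le_mu (Nat.choose_pos (by omega)) hmu.ge fun t ht => ?_
    exact hmu ▸ strictMonoOn_mu (Set.mem_Iic.2 ht.le) (Set.mem_Iic.2 le_rfl) ht
  · exact sigma_eq_of_le_mu mu_pos le_rfl fun t ht =>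
      strictMonoOn_mu (Set.mem_Iic.2 (ht.trans hs).le) (Set.mem_Iic.2 hs.le) ht

end TandemDup
end

section
/- For all w, r ∈ ℕ: μ(w,r,2) = C(w+2, 2) if r ≥ 2w; μ(w,r,2) = C(w+1, 2) + (r − w + 1) if w − 1 ≤ r < 2w; and μ(w,r,2) = C(r+2, 2) if r < w − 1; where C(·,·) denotes the binomial coefficient. -/
open scoped BigOperators Classical
open Filter

namespace TandemDup

variable {S : Type} [Fintype S] [DecidableEq S] [Ring S]

/-!
Complementation `v ↦ u - v` identifies `A_r(u)` with `A_2(u)` when `‖u‖₁ = r + 2`. An element of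
`A_2(u)` is either `2 eⱼ` with `u j ≥ 2` or `eᵢ + eⱼ` with `i ≠ j` in the support of `u`, so
`|A_2(u)| = b + C(a, 2)` where `a = #{j | 1 ≤ u j}` and `b = #{j | 2 ≤ u j}`. The pairs `(a, b)`
that occur are those with `b ≤ a ≤ w + 1` and `a + b ≤ r + 2`, and maximising `b + C(a, 2)` over them
gives the three regimes.
-/

open Finset

theorem eq_pi_single_of_sum_eq_apply {ι : Type*} [Fintype ι] [DecidableEq ι] {v : ι → ℕ} {j : ι}
    (h : ∑ i, v i = v j) : v = Pi.single j (v j) := by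
  have hrest : ∑ i ∈ univ.erase j, v i = 0 := by
    have := add_sum_erase univ v (mem_univ j)
    omega
  funext i
  by_cases hij : i = j
  · subst hij; simp
  · rw [Pi.single_eq_of_ne hij]
    exact sum_eq_zero_iff.1 hrest i (mem_erase.2 ⟨hij, mem_univ i⟩)

theorem sum_eq_card_of_le_one {ι : Type*} [Fintype ι] {v : ι → ℕ} (hv : ∀ i, v i ≤ 1) :
    ∑ i, v i = #{i | v i = 1} := by
  rw [card_filter]
  exact sum_congr rfl fun i _ => by have := hv i; split_ifs <;> omega

theorem card_filter_two_le_le_card_filter_one_le {ι : Type*} [Fintype ι] (u : ι → ℕ) :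
    #{j | 2 ≤ u j} ≤ #{j | 1 ≤ u j} :=
  card_le_card (monotone_filter_right _ fun _ h => by omega)

theorem card_filter_one_le_add_card_filter_two_le_le_sum {ι : Type*} [Fintype ι] (u : ι → ℕ) :
    #{j | 1 ≤ u j} + #{j | 2 ≤ u j} ≤ ∑ j, u j := by
  simp only [card_filter, ← sum_add_distrib]
  exact sum_le_sum fun j _ => by split_ifs <;> omega

theorem succ_choose_two (a : ℕ) : (a + 1).choose 2 = a + a.choose 2 := by
  rw [Nat.choose_succ_succ', Nat.choose_one_right]

theorem add_choose_two_le_succ_choose_two {a b : ℕ} (hba : b ≤ a) :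
    b + a.choose 2 ≤ (a + 1).choose 2 := by
  rw [succ_choose_two]; omega

theorem add_choose_two_le_choose_two_add_sub {a b n m : ℕ} (hba : b ≤ a) (ha : a ≤ n)
    (hab : a + b ≤ m) : b + a.choose 2 ≤ n.choose 2 + (m - n) := by
  rcases ha.lt_or_eq with ha | rfl
  · have := Nat.choose_le_choose 2 (show a + 1 ≤ n from ha)
    have := add_choose_two_le_succ_choose_two hba
    omega
  · omega

theorem add_choose_two_le_choose_two_of_add_le {a b m : ℕ} (hba : b ≤ a) (hab : a + b ≤ m) :
    b + a.choose 2 ≤ m.choose 2 := by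
  rcases b.eq_zero_or_pos with rfl | hb
  · simpa using Nat.choose_le_choose 2 (by omega : a ≤ m)
  · exact (add_choose_two_le_succ_choose_two hba).trans (Nat.choose_le_choose 2 (by omega))

section LowerBounds

variable {w : ℕ}

theorem ncard_lbs_eq_of_sum_eq {r s : ℕ} {u : Fin (w + 1) → ℕ} (hu : ∑ j, u j = r + s) :
    (lbs w r u).ncard = (lbs w s u).ncard := by
  have hsum : ∀ v ≤ u, ∑ j, (u - v) j + ∑ j, v j = ∑ j, u j := fun v hv => by
    rw [← sum_add_distrib]
    exact sum_congr rfl fun j _ => Nat.sub_add_cancel (hv j)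
  refine Set.ncard_congr (fun v _ => u - v) ?_ ?_ ?_
  · rintro v ⟨hvr, hvu⟩
    exact ⟨by have := hsum v hvu; omega, tsub_le_self⟩
  · rintro v₁ v₂ ⟨-, h₁⟩ ⟨-, h₂⟩ h
    funext j
    have hj := congrFun h j
    have : v₁ j ≤ u j := h₁ j
    have : v₂ j ≤ u j := h₂ j
    simp only [Pi.sub_apply] at hj
    omega
  · rintro v ⟨hvs, hvu⟩
    exact ⟨u - v, ⟨by have := hsum v hvu; omega, tsub_le_self⟩, tsub_tsub_cancel_of_le hvu⟩

theorem lbs_two_eq (u : Fin (w + 1) → ℕ) :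
    lbs w 2 u = ↑((({j | 2 ≤ u j} : Finset _).image fun j => Pi.single j 2) ∪
      ((({j | 1 ≤ u j} : Finset _).powersetCard 2).image fun P i => if i ∈ P then 1 else 0)) := by
  ext v
  simp only [lbs, Set.mem_ofPred_eq, coe_union, coe_image, Set.mem_union, Set.mem_image, mem_coe,
    mem_filter, mem_univ, true_and, mem_powersetCard]
  constructor
  · rintro ⟨hv, hvu⟩
    by_cases htwo : ∃ j, v j = 2
    · obtain ⟨j, hj⟩ := htwo
      have : v j ≤ u j := hvu j
      refine Or.inl ⟨j, by omega, ?_⟩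
      rw [eq_pi_single_of_sum_eq_apply (hv.trans hj.symm), hj]
    · push Not at htwo
      have hle : ∀ i, v i ≤ 1 := fun i => by
        have := hv ▸ single_le_sum (fun i _ => Nat.zero_le (v i)) (mem_univ i)
        have := htwo i
        omega
      refine Or.inr ⟨({i | v i = 1} : Finset _), ⟨fun i hi => ?_, ?_⟩, ?_⟩
      · have : v i ≤ u i := hvu i
        simp only [mem_filter, mem_univ, true_and] at hi ⊢
        omega
      · rw [← sum_eq_card_of_le_one hle, hv]
      · funext i
        have := hle i
        simp only [mem_filter, mem_univ, true_and]
        split_ifs <;> omega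
  · rintro (⟨j, hj, rfl⟩ | ⟨P, ⟨hPu, hP⟩, rfl⟩)
    · refine ⟨by simp, fun i => ?_⟩
      by_cases hij : i = j
      · subst hij; simpa using hj
      · simp [Pi.single_eq_of_ne hij]
    · refine ⟨by simp [hP], fun i => ?_⟩
      by_cases hi : i ∈ P
      · simpa [hi] using hPu hi
      · simp [hi]

theorem ncard_lbs_two (u : Fin (w + 1) → ℕ) :
    (lbs w 2 u).ncard = #{j | 2 ≤ u j} + (#{j | 1 ≤ u j}).choose 2 := by
  have hdisj : Disjoint (({j | 2 ≤ u j} : Finset _).image fun j => Pi.single j 2)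
      ((({j | 1 ≤ u j} : Finset _).powersetCard 2).image fun P i => if i ∈ P then 1 else 0) := by
    simp only [disjoint_left, mem_image]
    rintro _ ⟨j, -, rfl⟩ ⟨P, -, hP⟩
    have := congrFun hP j
    simp only [Pi.single_eq_same] at this
    split_ifs at this; omega
  rw [lbs_two_eq, Set.ncard_coe_finset, card_union_of_disjoint hdisj,
    card_image_of_injective _ fun j k h => by
      by_contra hjk; simpa [Pi.single_eq_of_ne hjk] using congrFun h j,
    card_image_of_injective _ fun P Q h => ?_, card_powersetCard]
  ext i
  have := congrFun h i
  by_cases hP : i ∈ P <;> by_cases hQ : i ∈ Q <;> simp_all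

/-- The surplus `e` is put on coordinate `0`, which keeps both counts only if `u 0 ≥ 2` already. -/
theorem exists_card_filter_eq {a b e : ℕ} (hba : b ≤ a) (ha : a ≤ w + 1) (he : e = 0 ∨ 0 < b) :
    ∃ u : Fin (w + 1) → ℕ, ∑ j, u j = a + b + e ∧ #{j | 2 ≤ u j} = b ∧ #{j | 1 ≤ u j} = a := by
  set f : ℕ → ℕ := fun n =>
    (if n < a then 1 else 0) + (if n < b then 1 else 0) + if n = 0 then e else 0
  have hf : ∀ n, (1 ≤ f n ↔ n < a) ∧ (2 ≤ f n ↔ n < b) := fun n => by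
    simp only [f]
    split_ifs <;> omega
  set u : Fin (w + 1) → ℕ := fun j => f j
  refine ⟨u, ?_, ?_, ?_⟩
  · simp only [u, f, sum_add_distrib, sum_boole, Nat.cast_id, Fin.card_filter_val_lt,
      Fin.val_eq_zero_iff, sum_ite_eq', mem_univ, if_true]
    omega
  · simp only [u, fun j : Fin (w + 1) => (hf j).2, Fin.card_filter_val_lt]
    omega
  · simp only [u, fun j : Fin (w + 1) => (hf j).1, Fin.card_filter_val_lt]
    omega

theorem mu_two_eq {r T : ℕ}
    (hle : ∀ a b, b ≤ a → a ≤ w + 1 → a + b ≤ r + 2 → b + a.choose 2 ≤ T)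
    (hex : ∃ a b e, b ≤ a ∧ a ≤ w + 1 ∧ (e = 0 ∨ 0 < b) ∧ a + b + e = r + 2 ∧
      b + a.choose 2 = T) :
    mu w r 2 = T := by
  have hncard : ∀ u : Fin (w + 1) → ℕ, ∑ j, u j = r + 2 →
      (lbs w r u).ncard = #{j | 2 ≤ u j} + (#{j | 1 ≤ u j}).choose 2 := fun u hu => by
    rw [ncard_lbs_eq_of_sum_eq hu, ncard_lbs_two]
  obtain ⟨a, b, e, hba, ha, he, hsum, rfl⟩ := hex
  obtain ⟨u, hu, hb, ha⟩ := exists_card_filter_eq hba ha he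
  refine IsGreatest.csSup_eq ⟨⟨u, hsum ▸ hu, by rw [hncard u (hsum ▸ hu), hb, ha]⟩, ?_⟩
  rintro _ ⟨v, hv, rfl⟩
  rw [hncard v hv]
  exact hle _ _ (card_filter_two_le_le_card_filter_one_le v) (card_le_univ _ |>.trans_eq (by simp))
    (hv ▸ card_filter_one_le_add_card_filter_two_le_le_sum v)

end LowerBounds

theorem statement10 (w r : ℕ) :
    (2 * w ≤ r → mu w r 2 = Nat.choose (w + 2) 2) ∧
    (w ≤ r + 1 → r < 2 * w → mu w r 2 = Nat.choose (w + 1) 2 + (r + 1 - w)) ∧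
    (r + 1 < w → mu w r 2 = Nat.choose (r + 2) 2) := by
  refine ⟨fun hr => ?_, fun hw hr => ?_, fun hr => ?_⟩
  · exact mu_two_eq
      (fun a b hba ha _ => (add_choose_two_le_succ_choose_two hba).trans
        (Nat.choose_le_choose 2 (by omega)))
      ⟨w + 1, w + 1, r - 2 * w, le_rfl, le_rfl, Or.inr w.succ_pos, by omega,
        (succ_choose_two _).symm⟩
  · exact mu_two_eq
      (fun a b hba ha hab => (add_choose_two_le_choose_two_add_sub hba ha hab).trans_eq (by omega))
      ⟨w + 1, r + 1 - w, 0, by omega, le_rfl, Or.inl rfl, by omega, by omega⟩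
  · exact mu_two_eq (fun a b hba _ hab => add_choose_two_le_choose_two_of_add_le hba hab)
      ⟨r + 2, 0, 0, by omega, by omega, Or.inl rfl, by omega, by simp⟩

end TandemDup
end

section
/- Let t, w, r ∈ ℕ with r + t ≤ w + 1. Then for all s ≤ t it holds that μ(w,r,s) = C(r+s, s), where C(·,·) denotes the binomial coefficient. -/
open scoped BigOperators Classical
open Filter

namespace TandemDup

variable {S : Type} [Fintype S] [DecidableEq S] [Ring S]

-- upper bound
lemma lbs_ncard_le (w r s : ℕ) (u : Fin (w+1) → ℕ) (hu : ∑ j, u j = r + s) :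
    (lbs w r u).ncard ≤ (r+s).choose s := by
  classical
  set T : Finset ((_ : Fin (w+1)) × ℕ) := Finset.univ.sigma (fun j => Finset.range (u j)) with hT
  have hTcard : T.card = r + s := by
    simp [hT, Finset.card_sigma, hu]
  set Φ : (Fin (w+1) → ℕ) → Finset ((_ : Fin (w+1)) × ℕ) :=
    fun v => Finset.univ.sigma (fun j => Finset.Ico (v j) (u j)) with hΦ
  have hmem : ∀ v ∈ lbs w r u, Φ v ∈ (↑(T.powersetCard s) : Set (Finset ((_ : Fin (w+1)) × ℕ))) := by
    rintro v ⟨hv, hvu⟩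
    rw [Finset.mem_coe, Finset.mem_powersetCard]
    constructor
    · intro p hp
      simp only [hΦ, Finset.mem_sigma, Finset.mem_univ, true_and, Finset.mem_Ico] at hp
      simp [hT, Finset.mem_sigma, hp.2]
    · have : ∀ j, v j ≤ u j := fun j => hvu j
      rw [hΦ]
      simp only [Finset.card_sigma, Nat.card_Ico]
      have h1 : ∑ j, (u j - v j) + ∑ j, v j = ∑ j, u j := by
        rw [← Finset.sum_add_distrib]
        exact Finset.sum_congr rfl fun j _ => Nat.sub_add_cancel (this j)
      omega
  have hinj : Set.InjOn Φ (lbs w r u) := by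
    rintro v₁ ⟨hv₁, hvu₁⟩ v₂ ⟨hv₂, hvu₂⟩ he
    funext j
    have hIco : Finset.Ico (v₁ j) (u j) = Finset.Ico (v₂ j) (u j) := by
      ext x
      have := Finset.ext_iff.mp he ⟨j, x⟩
      simpa [hΦ, Finset.mem_sigma] using this
    have hc := congrArg Finset.card hIco
    simp only [Nat.card_Ico] at hc
    have h1 : v₁ j ≤ u j := hvu₁ j
    have h2 : v₂ j ≤ u j := hvu₂ j
    omega
  calc (lbs w r u).ncard ≤ (↑(T.powersetCard s) : Set (Finset ((_ : Fin (w+1)) × ℕ))).ncard :=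
        Set.ncard_le_ncard_of_injOn Φ hmem hinj (T.powersetCard s).finite_toSet
    _ = (r+s).choose s := by
        rw [Set.ncard_coe_finset, Finset.card_powersetCard, hTcard]

lemma lbs_ncard_eq (w r s : ℕ) (hrs : r + s ≤ w + 1) :
    ∃ u : Fin (w+1) → ℕ, (∑ j, u j) = r + s ∧ (lbs w r u).ncard = (r+s).choose s := by
  classical
  set u₀ : Fin (w+1) → ℕ := fun j => if (j : ℕ) < r + s then 1 else 0 with hu₀
  set B : Finset (Fin (w+1)) := Finset.univ.filter (fun j => (j : ℕ) < r + s) with hB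
  have hBcard : B.card = r + s := by
    rw [show r + s = (Finset.range (r+s)).card from (Finset.card_range _).symm]
    refine Finset.card_bij (fun j _ => (j : ℕ)) ?_ ?_ ?_
    · intro a ha
      simp only [hB, Finset.mem_filter] at ha
      simp [ha.2]
    · intro a _ b _ hab
      exact Fin.ext hab
    · intro b hb
      simp only [Finset.mem_range] at hb
      exact ⟨⟨b, by omega⟩, by simp [hB, hb], rfl⟩
  have hsum : ∑ j, u₀ j = r + s := by
    have : B.card = ∑ j, u₀ j := by rw [hB, Finset.card_filter]
    omega
  set ind : Finset (Fin (w+1)) → (Fin (w+1) → ℕ) := fun A j => if j ∈ A then 1 else 0 with hind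
  have hind_inj : Function.Injective ind := by
    intro A₁ A₂ he
    ext j
    have := congrFun he j
    simp only [hind] at this
    by_cases h1 : j ∈ A₁ <;> by_cases h2 : j ∈ A₂ <;> simp_all
  have heq : lbs w r u₀ = ind '' ↑(B.powersetCard r) := by
    ext v
    constructor
    · rintro ⟨hv, hvu⟩
      refine ⟨Finset.univ.filter (fun j => v j = 1), ?_, ?_⟩
      · rw [Finset.mem_coe, Finset.mem_powersetCard]
        constructor
        · intro j hj
          simp only [Finset.mem_filter, Finset.mem_univ, true_and] at hj
          have := hvu j
          rw [hB, Finset.mem_filter]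
          refine ⟨Finset.mem_univ _, ?_⟩
          by_contra hc
          simp [hu₀, hc] at this
          omega
        · rw [Finset.card_filter, ← hv]
          refine Finset.sum_congr rfl fun j _ => ?_
          have := hvu j
          simp only [hu₀] at this
          split_ifs with h
          · omega
          · have : v j ≤ 1 := le_trans this (by split_ifs <;> omega)
            omega
      · funext j
        simp only [hind, Finset.mem_filter, Finset.mem_univ, true_and]
        have := hvu j
        simp only [hu₀] at this
        have hle : v j ≤ 1 := le_trans this (by split_ifs <;> omega)
        split_ifs with h
        · omega
        · omega
    · rintro ⟨A, hA, rfl⟩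
      rw [Finset.mem_coe, Finset.mem_powersetCard] at hA
      constructor
      · rw [← hA.2]
        simp [hind, Finset.sum_boole, Finset.filter_univ_mem]
      · intro j
        simp only [hind, hu₀]
        split_ifs with h1 h2
        · omega
        · exact absurd ((hB ▸ hA.1) h1) (by simp [hB, h2])
        · omega
        · omega
  have : (lbs w r u₀).ncard = (r+s).choose s := by
    rw [heq, Set.ncard_image_of_injective _ hind_inj, Set.ncard_coe_finset,
      Finset.card_powersetCard, hBcard]
    rw [← Nat.choose_symm (by omega : r ≤ r + s)]
    congr 1
    omega
  exact ⟨u₀, hsum, this⟩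


theorem statement11 (t w r : ℕ) (h : r + t ≤ w + 1) :
    ∀ s ≤ t, mu w r s = Nat.choose (r + s) s := by
  intro s hs
  have hrs : r + s ≤ w + 1 := by omega
  obtain ⟨u₀, hu₀, hcard⟩ := lbs_ncard_eq w r s hrs
  have hbdd : ∀ N ∈ { N : ℕ | ∃ u : Fin (w + 1) → ℕ, (∑ j, u j) = r + s ∧
      N = (lbs w r u).ncard }, N ≤ (r+s).choose s := by
    rintro N ⟨u, hu, rfl⟩
    exact lbs_ncard_le w r s u hu
  have hmem : ((r+s).choose s) ∈ { N : ℕ | ∃ u : Fin (w + 1) → ℕ, (∑ j, u j) = r + s ∧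
      N = (lbs w r u).ncard } := ⟨u₀, hu₀, hcard.symm⟩
  rw [mu]
  exact le_antisymm (csSup_le ⟨_, hmem⟩ hbdd) (le_csSup ⟨_, hbdd⟩ hmem)


end TandemDup
end

section
/- Let Σ be a finite unital ring of size q ≥ 2, k ≥ 2 the duplication-window length. Let n, w, r ∈ ℕ satisfy 0 ≤ n − (1+r)k − w ≤ (k−1)(w+1). Then there exists an irreducible string x ∈ Σ^{n−kr} with wt_H(φ̄(x)) = w (so that D^r(x) ⊆ Σ^n). -/
/-!
A string with no factor `yy`, `|y| = k`, is not the result of any tandem duplication, hence is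
irreducible; and such a factor `yy` shows up in `φ̄(x)` as a run of `k` zeros. So it suffices to
take a `0/1` string `d` of length `n - (1 + r)k` with exactly `w` ones and no `k` consecutive
zeros — possible because the `n - (1 + r)k - w` zeros fit, at most `k - 1` at a time, into the
`w + 1` gaps around the ones — and to integrate it: every `d` is `φ̄(x)` for some `x`.
-/


open scoped BigOperators Classical
open Filter

namespace TandemDup

variable {S : Type}

theorem irred_of_forall_ne_square {k : ℕ} {x : List S} (hk : k ≤ x.length)
    (hsq : ∀ u y v : List S, y.length = k → x ≠ u ++ y ++ y ++ v) : Irred k x := by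
  refine ⟨hk, fun z hz => ?_⟩
  obtain ⟨t, ht⟩ := Set.mem_iUnion.mp hz
  cases t with
  | zero => exact ht
  | succ t =>
    obtain ⟨-, -, u, y, v, hy, -, rfl⟩ := ht
    exact absurd rfl (hsq u y v hy)

section Ring

variable [Ring S]

@[simp]
theorem length_phiBar (k : ℕ) (x : List S) : (phiBar k x).length = x.length - k := by
  simp [phiBar]

theorem getElem_phiBar {k : ℕ} (x : List S) (i : ℕ) (h : i < (phiBar k x).length) :
    (phiBar k x)[i] = x.getD (i + k) 0 - x.getD i 0 := by
  simp [phiBar]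

theorem replicate_zero_infix_phiBar_square (u y v : List S) :
    List.replicate y.length 0 <:+: phiBar y.length (u ++ y ++ y ++ v) := by
  refine List.infix_iff_getElem?.mpr ⟨u.length, by simp; omega, fun i hi => ?_⟩
  simp only [List.length_replicate] at hi
  rw [List.getElem?_eq_getElem (by simp; omega), getElem_phiBar, List.getElem_replicate,
    sub_eq_zero.mpr (by grind)]

theorem irred_of_not_replicate_zero_infix_phiBar {k : ℕ} {x : List S} (hk : k ≤ x.length)
    (h : ¬ List.replicate k 0 <:+: phiBar k x) : Irred k x :=
  irred_of_forall_ne_square hk fun u y v hy hx =>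
    h (hx ▸ hy ▸ replicate_zero_infix_phiBar_square u y v)

theorem exists_phiBar_eq {k : ℕ} (hk : 0 < k) (d : List S) :
    ∃ x : List S, x.length = d.length + k ∧ phiBar k x = d := by
  let f : ℕ → S := fun j => ∑ m ∈ Finset.range (j / k), d.getD (j % k + m * k) 0
  refine ⟨(List.range (d.length + k)).map f, by simp, List.ext_getElem (by simp) fun i h _ => ?_⟩
  simp only [List.length_map, List.length_range, length_phiBar, Nat.add_sub_cancel] at h
  have hx : ∀ j < d.length + k, ((List.range (d.length + k)).map f).getD j 0 = f j :=
    fun j hj => by simp [hj]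
  rw [getElem_phiBar, hx _ (by omega), hx _ (by omega)]
  simp only [f, Nat.add_div_right _ hk, Nat.add_mod_right, Finset.sum_range_succ, Nat.mod_add_div',
    add_sub_cancel_left, List.getD_eq_getElem _ _ h]

end Ring

def spreadOnes [Zero S] [One S] (a : ℕ) : ℕ → ℕ → List S
  | 0, z => List.replicate z 0
  | w + 1, z => List.replicate (min a z) 0 ++ 1 :: spreadOnes a w (z - min a z)

@[simp]
theorem length_spreadOnes [Zero S] [One S] (a w z : ℕ) :
    (spreadOnes (S := S) a w z).length = w + z := by
  induction w generalizing z with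
  | zero => simp [spreadOnes]
  | succ w ih =>
    simp only [spreadOnes, List.length_append, List.length_replicate, List.length_cons, ih]
    omega

theorem wtH_spreadOnes [DecidableEq S] [Ring S] [Nontrivial S] (a w z : ℕ) :
    wtH (spreadOnes (S := S) a w z) = w := by
  induction w generalizing z with
  | zero => simp [spreadOnes, wtH]
  | succ w ih =>
    simp only [wtH] at ih ⊢
    simpa [spreadOnes] using ih (z - min a z)

theorem not_replicate_zero_infix_spreadOnes [Zero S] [One S] [NeZero (1 : S)] {a w z : ℕ}
    (hz : z ≤ a * (w + 1)) : ¬ List.replicate (a + 1) (0 : S) <:+: spreadOnes a w z := by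
  induction w generalizing z with
  | zero =>
    intro h
    have := h.length_le
    simp at this
    omega
  | succ w ih =>
    rw [spreadOnes, List.infix_append_iff_ne_nil]
    rintro (h | h | ⟨l₁, l₂, -, hl₂, hl, -, hpre⟩)
    · simpa using h.length_le
    · rcases List.infix_cons_iff.mp h with h | h
      · simp [List.replicate_succ] at h
      · exact ih (by rw [Nat.mul_succ] at hz; omega) h
    · obtain ⟨b, t, rfl⟩ := List.exists_cons_of_ne_nil hl₂
      have hb : b ∈ List.replicate (a + 1) (0 : S) := by rw [hl]; simp
      simp [List.eq_of_mem_replicate hb] at hpre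

variable [Fintype S] [DecidableEq S] [Ring S]

theorem statement12 (hq : 2 ≤ Fintype.card S) (k : ℕ) (hk : 2 ≤ k)
    (n w r : ℕ) (h₁ : (1 + r) * k + w ≤ n)
    (h₂ : n - (1 + r) * k - w ≤ (k - 1) * (w + 1)) :
    ∃ x : List S, x.length = n - k * r ∧ Irred k x ∧ wgt k x = w := by
  have : Nontrivial S := Fintype.one_lt_card_iff_nontrivial.mp hq
  obtain ⟨a, rfl⟩ : ∃ a, k = a + 1 := ⟨k - 1, by omega⟩
  rw [Nat.add_sub_cancel] at h₂
  obtain ⟨x, hlen, hphi⟩ :=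
    exists_phiBar_eq a.succ_pos (spreadOnes (S := S) a w (n - (1 + r) * (a + 1) - w))
  have hlen' : x.length = n - (a + 1) * r := by
    rw [hlen, length_spreadOnes]
    have : (1 + r) * (a + 1) = (a + 1) + (a + 1) * r := by ring
    omega
  refine ⟨x, hlen', irred_of_not_replicate_zero_infix_phiBar (by omega) ?_, ?_⟩
  · rw [hphi]
    exact not_replicate_zero_infix_spreadOnes h₂
  · rw [wgt, hphi, wtH_spreadOnes]

end TandemDup
end

section
/- Let w, r, s, d ∈ ℕ be positive. Then there exist u ∈ Δ^w_{r+s} and C ⊆ A_r(u) whose distinct elements have pairwise d₁-distance ≥ d, with |C| = μ(w,r,s,d), such that there is no pair of indices 1 ≤ i, j ≤ w+1, i ≠ j, with u(i) ≥ 2 and u(j) = 0. -/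
open scoped BigOperators Classical
open Filter

namespace TandemDup

variable {S : Type} [Fintype S] [DecidableEq S] [Ring S]

private lemma sum_split' {w : ℕ} (i j : Fin (w + 1)) (hij : i ≠ j) (f : Fin (w + 1) → ℕ) :
    ∑ k, f k = f i + f j + ∑ k ∈ (Finset.univ.erase i).erase j, f k := by
  rw [← Finset.add_sum_erase _ f (Finset.mem_univ i),
    ← Finset.add_sum_erase _ f (Finset.mem_erase.2 ⟨hij.symm, Finset.mem_univ j⟩)]
  ring

/-- The rebalancing map: if `v i = u i`, move one unit from coordinate `i` to `j`. -/
private def tweak {w : ℕ} (u : Fin (w + 1) → ℕ) (i j : Fin (w + 1))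
    (v : Fin (w + 1) → ℕ) : Fin (w + 1) → ℕ :=
  if v i = u i then Function.update (Function.update v i (v i - 1)) j 1 else v

private lemma tweak_apply_i {w : ℕ} (u : Fin (w + 1) → ℕ) (i j : Fin (w + 1)) (hij : i ≠ j)
    (v : Fin (w + 1) → ℕ) : tweak u i j v i = if v i = u i then v i - 1 else v i := by
  unfold tweak
  split <;> simp [Function.update, hij]

private lemma tweak_apply_j {w : ℕ} (u : Fin (w + 1) → ℕ) (i j : Fin (w + 1))
    (v : Fin (w + 1) → ℕ) : tweak u i j v j = if v i = u i then 1 else v j := by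
  unfold tweak
  split <;> simp [Function.update]

private lemma tweak_apply_other {w : ℕ} (u : Fin (w + 1) → ℕ) (i j : Fin (w + 1))
    (v : Fin (w + 1) → ℕ) (k : Fin (w + 1)) (hki : k ≠ i) (hkj : k ≠ j) :
    tweak u i j v k = v k := by
  unfold tweak
  split <;> simp [Function.update, hki, hkj]

private lemma l1dist_tweak {w : ℕ} (u : Fin (w + 1) → ℕ) (i j : Fin (w + 1)) (hij : i ≠ j)
    (hui : 2 ≤ u i) (v₁ v₂ : Fin (w + 1) → ℕ) (h1le : v₁ ≤ u) (h2le : v₂ ≤ u)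
    (h1j : v₁ j = 0) (h2j : v₂ j = 0) :
    l1dist (tweak u i j v₁) (tweak u i j v₂) = l1dist v₁ v₂ := by
  unfold l1dist
  rw [sum_split' i j hij, sum_split' i j hij]
  have htail : ∑ k ∈ (Finset.univ.erase i).erase j,
      ((tweak u i j v₁ k - tweak u i j v₂ k) + (tweak u i j v₂ k - tweak u i j v₁ k)) =
      ∑ k ∈ (Finset.univ.erase i).erase j, ((v₁ k - v₂ k) + (v₂ k - v₁ k)) := by
    refine Finset.sum_congr rfl ?_
    intro k hk
    rw [Finset.mem_erase, Finset.mem_erase] at hk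
    rw [tweak_apply_other u i j v₁ k hk.2.1 hk.1, tweak_apply_other u i j v₂ k hk.2.1 hk.1]
  rw [htail]
  have e1i := tweak_apply_i u i j hij v₁
  have e2i := tweak_apply_i u i j hij v₂
  have e1j := tweak_apply_j u i j v₁
  have e2j := tweak_apply_j u i j v₂
  have b1 : v₁ i ≤ u i := h1le i
  have b2 : v₂ i ≤ u i := h2le i
  by_cases c1 : v₁ i = u i <;> by_cases c2 : v₂ i = u i <;>
    simp only [c1, c2, if_pos, if_neg, if_true, if_false] at e1i e2i e1j e2j <;>
    rw [e1i, e2i, e1j, e2j] <;> omega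

private lemma tweak_mem_lbs {w r : ℕ} (u : Fin (w + 1) → ℕ) (i j : Fin (w + 1)) (hij : i ≠ j)
    (hui : 2 ≤ u i) (huj : u j = 0) (v : Fin (w + 1) → ℕ) (hv : v ∈ lbs w r u) :
    tweak u i j v ∈ lbs w r (tweak u i j u) := by
  obtain ⟨hsum, hle⟩ := hv
  have hvj : v j = 0 := Nat.le_antisymm (huj ▸ hle j) (Nat.zero_le _)
  have hui' : tweak u i j u i = u i - 1 := by
    rw [tweak_apply_i u i j hij u]; simp
  have huj' : tweak u i j u j = 1 := by
    rw [tweak_apply_j u i j u]; simp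
  constructor
  · rw [sum_split' i j hij]
    rw [sum_split' i j hij] at hsum
    have htail : ∑ k ∈ (Finset.univ.erase i).erase j, tweak u i j v k =
        ∑ k ∈ (Finset.univ.erase i).erase j, v k := by
      refine Finset.sum_congr rfl ?_
      intro k hk
      rw [Finset.mem_erase, Finset.mem_erase] at hk
      exact tweak_apply_other u i j v k hk.2.1 hk.1
    rw [htail]
    have ei := tweak_apply_i u i j hij v
    have ej := tweak_apply_j u i j v
    have bi : v i ≤ u i := hle i
    by_cases c : v i = u i <;>
      simp only [c, if_pos, if_neg, if_true, if_false] at ei ej <;> rw [ei, ej] <;> omega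
  · intro k
    by_cases hki : k = i
    · rw [hki, hui', tweak_apply_i u i j hij v]
      have bi : v i ≤ u i := hle i
      by_cases c : v i = u i <;> simp only [c, if_true, if_false, reduceIte] <;> omega
    · by_cases hkj : k = j
      · rw [hkj, huj', tweak_apply_j u i j v]
        by_cases c : v i = u i <;> simp only [c, if_true, if_false, reduceIte] <;> omega
      · rw [tweak_apply_other u i j v k hki hkj, tweak_apply_other u i j u k hki hkj]
        exact hle k

private lemma tweak_injOn {w r : ℕ} (u : Fin (w + 1) → ℕ) (i j : Fin (w + 1)) (hij : i ≠ j)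
    (hui : 2 ≤ u i) (huj : u j = 0) (C : Set (Fin (w + 1) → ℕ)) (hC : C ⊆ lbs w r u) :
    Set.InjOn (tweak u i j) C := by
  intro v₁ h1 v₂ h2 heq
  have h1j : v₁ j = 0 := Nat.le_antisymm (huj ▸ (hC h1).2 j) (Nat.zero_le _)
  have h2j : v₂ j = 0 := Nat.le_antisymm (huj ▸ (hC h2).2 j) (Nat.zero_le _)
  funext k
  have hk := congrFun heq
  have ei1 := tweak_apply_i u i j hij v₁
  have ei2 := tweak_apply_i u i j hij v₂
  have ej1 := tweak_apply_j u i j v₁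
  have ej2 := tweak_apply_j u i j v₂
  by_cases c1 : v₁ i = u i <;> by_cases c2 : v₂ i = u i <;>
    simp only [c1, c2, if_pos, if_neg, if_true, if_false] at ei1 ei2 ej1 ej2
  · by_cases hki : k = i
    · subst hki; omega
    · by_cases hkj : k = j
      · subst hkj; omega
      · have := hk k
        rwa [tweak_apply_other u i j v₁ k hki hkj, tweak_apply_other u i j v₂ k hki hkj] at this
  · exfalso; have := hk j; rw [ej1, ej2] at this; omega
  · exfalso; have := hk j; rw [ej1, ej2] at this; omega
  · have := hk k
    unfold tweak at this
    rw [if_neg c1, if_neg c2] at this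
    exact this

private lemma rebalance (w r s d : ℕ) : ∀ n : ℕ, ∀ u : Fin (w + 1) → ℕ,
    ∀ C : Set (Fin (w + 1) → ℕ),
    (Finset.univ.filter (fun k => u k = 0)).card ≤ n →
    (∑ k, u k) = r + s →
    C ⊆ lbs w r u →
    (∀ v₁ ∈ C, ∀ v₂ ∈ C, v₁ ≠ v₂ → 2 * d ≤ l1dist v₁ v₂) →
    ∃ u' : Fin (w + 1) → ℕ, (∑ k, u' k) = r + s ∧
      ∃ C' : Set (Fin (w + 1) → ℕ), C' ⊆ lbs w r u' ∧
        (∀ v₁ ∈ C', ∀ v₂ ∈ C', v₁ ≠ v₂ → 2 * d ≤ l1dist v₁ v₂) ∧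
        C'.ncard = C.ncard ∧
        ∀ i j : Fin (w + 1), i ≠ j → ¬(2 ≤ u' i ∧ u' j = 0) := by
  intro n
  induction n with
  | zero =>
    intro u C hcard hsum hCl hCd
    refine ⟨u, hsum, C, hCl, hCd, rfl, ?_⟩
    intro i j hij ⟨h2, h0⟩
    have : j ∈ Finset.univ.filter (fun k => u k = 0) := by
      simp [h0]
    have := Finset.card_pos.2 ⟨j, this⟩
    omega
  | succ n ih =>
    intro u C hcard hsum hCl hCd
    by_cases hgood : ∀ i j : Fin (w + 1), i ≠ j → ¬(2 ≤ u i ∧ u j = 0)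
    · exact ⟨u, hsum, C, hCl, hCd, rfl, hgood⟩
    push_neg at hgood
    obtain ⟨i, j, hij, hui, huj⟩ := hgood
    set u' := tweak u i j u with hu'
    set C' := tweak u i j '' C with hC'
    have hui' : u' i = u i - 1 := by rw [hu', tweak_apply_i u i j hij u]; simp
    have huj' : u' j = 1 := by rw [hu', tweak_apply_j u i j u]; simp
    have huk' : ∀ k, k ≠ i → k ≠ j → u' k = u k := fun k h1 h2 =>
      tweak_apply_other u i j u k h1 h2
    -- fewer zeros
    have hzero : (Finset.univ.filter (fun k => u' k = 0)).card ≤ n := by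
      have hsub : Finset.univ.filter (fun k => u' k = 0) ⊆
          (Finset.univ.filter (fun k => u k = 0)).erase j := by
        intro k hk
        rw [Finset.mem_filter] at hk
        have hkj : k ≠ j := by intro h; subst h; omega
        have hki : k ≠ i := by intro h; subst h; omega
        rw [Finset.mem_erase, Finset.mem_filter]
        refine ⟨hkj, Finset.mem_univ k, ?_⟩
        rw [← huk' k hki hkj]; exact hk.2
      have hjmem : j ∈ Finset.univ.filter (fun k => u k = 0) := by simp [huj]
      have := Finset.card_le_card hsub
      rw [Finset.card_erase_of_mem hjmem] at this
      omega
    -- new sum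
    have hsum' : (∑ k, u' k) = r + s := by
      rw [sum_split' i j hij, hui', huj']
      rw [sum_split' i j hij] at hsum
      have htail : ∑ k ∈ (Finset.univ.erase i).erase j, u' k =
          ∑ k ∈ (Finset.univ.erase i).erase j, u k := by
        refine Finset.sum_congr rfl ?_
        intro k hk
        rw [Finset.mem_erase, Finset.mem_erase] at hk
        exact huk' k hk.2.1 hk.1
      rw [htail]
      omega
    -- new C
    have hCl' : C' ⊆ lbs w r u' := by
      rintro _ ⟨v, hv, rfl⟩
      exact tweak_mem_lbs u i j hij hui huj v (hCl hv)
    have hinj : Set.InjOn (tweak u i j) C := tweak_injOn u i j hij hui huj C hCl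
    have hCd' : ∀ v₁ ∈ C', ∀ v₂ ∈ C', v₁ ≠ v₂ → 2 * d ≤ l1dist v₁ v₂ := by
      rintro _ ⟨v₁, h1, rfl⟩ _ ⟨v₂, h2, rfl⟩ hne
      have hne' : v₁ ≠ v₂ := fun h => hne (by rw [h])
      have h1j : v₁ j = 0 := Nat.le_antisymm (huj ▸ (hCl h1).2 j) (Nat.zero_le _)
      have h2j : v₂ j = 0 := Nat.le_antisymm (huj ▸ (hCl h2).2 j) (Nat.zero_le _)
      rw [l1dist_tweak u i j hij hui v₁ v₂ (hCl h1).2 (hCl h2).2 h1j h2j]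
      exact hCd v₁ h1 v₂ h2 hne'
    obtain ⟨u'', hs'', C'', h1, h2, h3, h4⟩ := ih u' C' hzero hsum' hCl' hCd'
    refine ⟨u'', hs'', C'', h1, h2, ?_, h4⟩
    rw [h3, hC', Set.ncard_image_of_injOn hinj]

theorem statement17 (w r s d : ℕ) (hw : 0 < w) (hr : 0 < r) (hs : 0 < s) (hd : 0 < d) :
    ∃ u : Fin (w + 1) → ℕ, (∑ j, u j) = r + s ∧
      ∃ C : Set (Fin (w + 1) → ℕ), C ⊆ lbs w r u ∧
        (∀ v₁ ∈ C, ∀ v₂ ∈ C, v₁ ≠ v₂ → 2 * d ≤ l1dist v₁ v₂) ∧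
        C.ncard = muD w r s d ∧
        ∀ i j : Fin (w + 1), i ≠ j → ¬(2 ≤ u i ∧ u j = 0) := by
  classical
  set T := { N : ℕ | ∃ u : Fin (w + 1) → ℕ, (∑ j, u j) = r + s ∧
    ∃ C : Set (Fin (w + 1) → ℕ), C ⊆ lbs w r u ∧
      (∀ v₁ ∈ C, ∀ v₂ ∈ C, v₁ ≠ v₂ → 2 * d ≤ l1dist v₁ v₂) ∧ N = C.ncard } with hT
  have hne : T.Nonempty := by
    refine ⟨0, Pi.single 0 (r + s), ?_, ∅, ?_, ?_, ?_⟩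
    · simp
    · exact Set.empty_subset _
    · intro v₁ h1; exact absurd h1 (Set.notMem_empty v₁)
    · simp
  have hBfin : (Set.univ.pi fun _ : Fin (w + 1) => Set.Iic r).Finite :=
    Set.Finite.pi fun _ => Set.finite_Iic r
  have hbdd : BddAbove T := by
    refine ⟨(Set.univ.pi fun _ : Fin (w + 1) => Set.Iic r).ncard, ?_⟩
    rintro N ⟨u, hsum, C, hCl, _, rfl⟩
    refine Set.ncard_le_ncard ?_ hBfin
    intro v hv
    intro k _
    have := (hCl hv).1
    calc v k ≤ ∑ j, v j := Finset.single_le_sum (fun _ _ => Nat.zero_le _) (Finset.mem_univ k)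
    _ = r := this
  have hmem : muD w r s d ∈ T := by
    have : muD w r s d = sSup T := rfl
    rw [this]
    exact Nat.sSup_mem hne hbdd
  obtain ⟨u, hsum, C, hCl, hCd, hN⟩ := hmem
  obtain ⟨u', hs', C', h1, h2, h3, h4⟩ :=
    rebalance w r s d (Finset.univ.filter (fun k => u k = 0)).card u C le_rfl hsum hCl hCd
  exact ⟨u', hs', C', h1, h2, by rw [h3, ← hN], h4⟩

end TandemDup
end
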